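/- arXiv:2106.02326 — 13 statements merged into one kernel-verified Lean document; each statement's English description precedes it below -/
import Mathlib

section
/- Let d ≥ 1, L ∈ (0,∞) and ρ ∈ (−1/(2L), ∞). Let F : ℝ^d → ℝ^d be L-Lipschitz and ρ-comonotone, and let z_* ∈ ℝ^d satisfy F z_* = 0. Then for any initial point z₀ ∈ ℝ^d, the FEG iterates {z_k}_{k≥0} satisfy ‖F z_k‖² ≤ 4‖z₀ − z_*‖² / ((1/L + 2ρ)² k²) for all k ≥ 1. -/
open scoped RealInnerProductSpace

/-- Exact algebraic identity behind the FEG Lyapunov decrease (performance-estimation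
certificate).  Here `g = F z_k`, `h = F w_k`, `G = F z_{k+1}`, `m = z_k - z₀`, and the
explicit linear combinations are `z_{k+1} - z₀`, `z_{k+1} - z_k`, `z_{k+1} - w_k`. -/
lemma feg_key_identity {E : Type*} [NormedAddCommGroup E] [InnerProductSpace ℝ E]
    (L ρ kR : ℝ) (hL : L ≠ 0) (hK : kR + 1 ≠ 0)
    (g h G m : E) :
    (kR ^ 2 / 2 * (1 / L + 2 * ρ)) * ⟪g, g⟫ - ρ * kR * ⟪g, g⟫ + kR * ⟪g, m⟫
      - (((kR + 1) ^ 2 / 2 * (1 / L + 2 * ρ)) * ⟪G, G⟫ - ρ * (kR + 1) * ⟪G, G⟫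
        + (kR + 1) * ⟪G, (1 - (kR + 1)⁻¹) • m - (1 / L) • h
            - ((1 - (kR + 1)⁻¹) * (2 * ρ)) • g⟫)
    = kR * (kR + 1) *
        (⟪G - g, ((kR + 1)⁻¹) • (-m) - (1 / L) • h - ((1 - (kR + 1)⁻¹) * (2 * ρ)) • g⟫
          - ρ * ⟪G - g, G - g⟫)
      + ((kR + 1) ^ 2 / (2 * L)) *
        (L ^ 2 * ⟪((1 - (kR + 1)⁻¹) * (1 / L)) • g - (1 / L) • h,
            ((1 - (kR + 1)⁻¹) * (1 / L)) • g - (1 / L) • h⟫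
          - ⟪G - h, G - h⟫) := by
  simp only [inner_sub_left, inner_sub_right, inner_add_left, inner_add_right,
    inner_smul_left, inner_smul_right, inner_neg_left, inner_neg_right,
    RCLike.ofReal_real_eq_id, id_eq, conj_trivial]
  simp only [real_inner_comm h g, real_inner_comm G g, real_inner_comm G h,
    real_inner_comm m g, real_inner_comm m h, real_inner_comm m G]
  field_simp
  ring

/-- **FEG convergence** (Theorem 1 of the paper).
For an `L`-Lipschitz and `ρ`-comonotone operator `F` on `ℝ^d` with `ρ > -1/(2L)`,
and `z_*` a zero of `F`, the FEG iterates satisfy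
`‖F z_k‖² ≤ 4‖z₀ - z_*‖² / ((1/L + 2ρ)² k²)` for all `k ≥ 1`. -/
theorem feg_convergence
    {d : ℕ} (hd : 1 ≤ d)
    (L ρ : ℝ) (hL : 0 < L) (hρ : -(1 / (2 * L)) < ρ)
    (F : EuclideanSpace ℝ (Fin d) → EuclideanSpace ℝ (Fin d))
    (hLip : ∀ z z' : EuclideanSpace ℝ (Fin d), ‖F z - F z'‖ ≤ L * ‖z - z'‖)
    (hComono : ∀ z z' : EuclideanSpace ℝ (Fin d),
      ρ * ‖F z - F z'‖ ^ 2 ≤ ⟪F z - F z', z - z'⟫)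
    (zstar : EuclideanSpace ℝ (Fin d)) (hzstar : F zstar = 0)
    (z0 : EuclideanSpace ℝ (Fin d))
    (z w : ℕ → EuclideanSpace ℝ (Fin d))
    (hz0 : z 0 = z0)
    (hw : ∀ k : ℕ, w k = z k + (((k : ℝ) + 1)⁻¹) • (z0 - z k)
      - ((1 - ((k : ℝ) + 1)⁻¹) * (1 / L + 2 * ρ)) • F (z k))
    (hz : ∀ k : ℕ, z (k + 1) = z k + (((k : ℝ) + 1)⁻¹) • (z0 - z k)
      - (1 / L) • F (w k) - ((1 - ((k : ℝ) + 1)⁻¹) * (2 * ρ)) • F (z k)) :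
    ∀ k : ℕ, 1 ≤ k →
      ‖F (z k)‖ ^ 2 ≤ 4 * ‖z0 - zstar‖ ^ 2 / ((1 / L + 2 * ρ) ^ 2 * (k : ℝ) ^ 2) := by
  -- the Lyapunov function
  set W : ℕ → ℝ := fun n =>
    ((n : ℝ) ^ 2 / 2 * (1 / L + 2 * ρ)) * ‖F (z n)‖ ^ 2
      - ρ * (n : ℝ) * ‖F (z n)‖ ^ 2 + (n : ℝ) * ⟪F (z n), z n - z0⟫ with hWdef
  have hLne : L ≠ 0 := ne_of_gt hL
  -- one-step decrease of the Lyapunov function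
  have hstep : ∀ k : ℕ, W (k + 1) ≤ W k := by
    intro k
    have hKpos : (0 : ℝ) < (k : ℝ) + 1 := by positivity
    have hKne : (k : ℝ) + 1 ≠ 0 := ne_of_gt hKpos
    -- vector identities from the update rules
    have e1 : z (k + 1) - z0 = (1 - ((k : ℝ) + 1)⁻¹) • (z k - z0) - (1 / L) • F (w k)
        - ((1 - ((k : ℝ) + 1)⁻¹) * (2 * ρ)) • F (z k) := by
      rw [hz k]; module
    have e2 : z (k + 1) - z k = (((k : ℝ) + 1)⁻¹) • (-(z k - z0)) - (1 / L) • F (w k)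
        - ((1 - ((k : ℝ) + 1)⁻¹) * (2 * ρ)) • F (z k) := by
      rw [hz k]; module
    have e3 : z (k + 1) - w k = ((1 - ((k : ℝ) + 1)⁻¹) * (1 / L)) • F (z k) - (1 / L) • F (w k) := by
      rw [hz k, hw k]; module
    -- the two inequality resources
    have comono : ρ * ‖F (z (k + 1)) - F (z k)‖ ^ 2 ≤ ⟪F (z (k + 1)) - F (z k), z (k + 1) - z k⟫ := hComono (z (k + 1)) (z k)
    have lip : ‖F (z (k + 1)) - F (w k)‖ ≤ L * ‖z (k + 1) - w k‖ := hLip (z (k + 1)) (w k)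
    have lip2 : ‖F (z (k + 1)) - F (w k)‖ ^ 2 ≤ L ^ 2 * ‖z (k + 1) - w k‖ ^ 2 := by
      nlinarith [norm_nonneg (F (z (k + 1)) - F (w k)), norm_nonneg (z (k + 1) - w k)]
    -- the exact identity
    have identity : W k - W (k + 1)
        = (k : ℝ) * ((k : ℝ) + 1) * (⟪F (z (k + 1)) - F (z k), z (k + 1) - z k⟫ - ρ * ‖F (z (k + 1)) - F (z k)‖ ^ 2)
          + (((k : ℝ) + 1) ^ 2 / (2 * L))
            * (L ^ 2 * ‖z (k + 1) - w k‖ ^ 2 - ‖F (z (k + 1)) - F (w k)‖ ^ 2) := by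
      simp only [hWdef]
      push_cast
      rw [e1, e2, e3]
      simp only [← real_inner_self_eq_norm_sq]
      exact feg_key_identity L ρ (k : ℝ) hLne hKne (F (z k)) (F (w k)) (F (z (k + 1))) (z k - z0)
    have t1 : 0 ≤ (k : ℝ) * ((k : ℝ) + 1) * (⟪F (z (k + 1)) - F (z k), z (k + 1) - z k⟫ - ρ * ‖F (z (k + 1)) - F (z k)‖ ^ 2) := by
      apply mul_nonneg (by positivity) (by linarith)
    have t2 : 0 ≤ (((k : ℝ) + 1) ^ 2 / (2 * L))
        * (L ^ 2 * ‖z (k + 1) - w k‖ ^ 2 - ‖F (z (k + 1)) - F (w k)‖ ^ 2) := by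
      apply mul_nonneg (by positivity) (by linarith)
    have h4 : 0 ≤ W k - W (k + 1) := by rw [identity]; exact add_nonneg t1 t2
    exact sub_nonneg.mp h4
  -- the Lyapunov function is nonpositive
  have hW0 : W 0 = 0 := by simp [hWdef]
  have hWle : ∀ k : ℕ, W k ≤ 0 := by
    intro k
    induction k with
    | zero => exact le_of_eq hW0
    | succ n ih => exact le_trans (hstep n) ih
  -- conclusion
  intro k hk
  have hkR : (1 : ℝ) ≤ (k : ℝ) := by exact_mod_cast hk
  have hk0 : (0 : ℝ) ≤ (k : ℝ) := by linarith
  have hc : 0 < 1 / L + 2 * ρ := by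
    have h1 : (0 : ℝ) < 1 / (2 * L) := by positivity
    have h2 : 2 * (1 / (2 * L)) = 1 / L := by field_simp
    linarith
  set g := F (z k) with hg
  have comono_star : ρ * ‖g‖ ^ 2 ≤ ⟪g, z k - zstar⟫ := by
    have := hComono (z k) zstar
    rwa [hzstar, sub_zero] at this
  have cauchy : ⟪g, z0 - zstar⟫ ≤ ‖g‖ * ‖z0 - zstar‖ := real_inner_le_norm g (z0 - zstar)
  have split : ⟪g, z k - z0⟫ = ⟪g, z k - zstar⟫ - ⟪g, z0 - zstar⟫ := by
    rw [← inner_sub_right, show (z k - zstar) - (z0 - zstar) = z k - z0 from by abel]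
  have hWk := hWle k
  simp only [hWdef] at hWk
  have t1 : (k : ℝ) * (ρ * ‖g‖ ^ 2) ≤ (k : ℝ) * ⟪g, z k - zstar⟫ :=
    mul_le_mul_of_nonneg_left comono_star hk0
  have t2 : (k : ℝ) * ⟪g, z k - z0⟫
      = (k : ℝ) * ⟪g, z k - zstar⟫ - (k : ℝ) * ⟪g, z0 - zstar⟫ := by
    rw [split]; ring
  have t3 : (k : ℝ) * ⟪g, z0 - zstar⟫ ≤ (k : ℝ) * (‖g‖ * ‖z0 - zstar‖) :=
    mul_le_mul_of_nonneg_left cauchy hk0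
  have key : ((k : ℝ) ^ 2 / 2 * (1 / L + 2 * ρ)) * ‖g‖ ^ 2
      ≤ (k : ℝ) * (‖g‖ * ‖z0 - zstar‖) := by linarith
  rw [le_div_iff₀ (by positivity)]
  nlinarith [sq_nonneg ((1 / L + 2 * ρ) * (k : ℝ) * ‖g‖ - 2 * ‖z0 - zstar‖),
    mul_le_mul_of_nonneg_left key (le_of_lt hc), norm_nonneg g, norm_nonneg (z0 - zstar),
    sq_nonneg ‖g‖, mul_pos hc (lt_of_lt_of_le one_pos hkR)]
end

section
/- Let L > 0 and let F : ℝ² → ℝ² be given by F(x,y) = (L y, −L x) (the saddle gradient of f(x,y) = L x y, whose unique zero is z_* = (0,0)). Then the FEG iterates with parameters L and ρ = 0 started from z₀ = (1,0) satisfy z_{4l+2} = (0, 1/(2l+1)) for all l ≥ 0; consequently ‖F z_{4l+2}‖² = L²/(2l+1)² = 4 L² ‖z₀ − z_*‖² / (4l+2)² for all l ≥ 0. -/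
open scoped RealInnerProductSpace

/-!
Write `F = L • A`, so that `A` is a quarter turn: `A (A x) = -x`. With `ρ = 0` the extrapolation
step and the update combine into `(k + 1) z_{k+1} = (1 - A) z₀ - A (k z_k)`, so the scaled iterates
`s_k = k z_k` follow the affine map `s ↦ b - A s` from `s_0 = 0`. Applying this map twice gives
`s ↦ b - A b - s`, hence `s` is `4`-periodic and `s_{4l+2} = s_2 = b - A b = -2 A z₀`, i.e.
`z_{4l+2} = -(2 / (4l+2)) A z₀ = (0, 1/(2l+1))`.
-/

section QuarterTurn

variable {E : Type*} [AddCommGroup E] [Module ℝ E]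

theorem affine_quarter_turn_orbit_add_four {T : E →ₗ[ℝ] E} (hT : ∀ x, T (T x) = -x)
    {b : E} {s : ℕ → E} (hs : ∀ k, s (k + 1) = b + T (s k)) (k : ℕ) : s (k + 4) = s k := by
  have two_steps : ∀ k, s (k + 2) = b + T b - s k := fun k => by
    rw [hs, hs, map_add, hT]; abel
  rw [two_steps, two_steps]; abel

theorem affine_quarter_turn_orbit_four_mul_add_two {T : E →ₗ[ℝ] E} (hT : ∀ x, T (T x) = -x)
    {b : E} {s : ℕ → E} (hs : ∀ k, s (k + 1) = b + T (s k)) (h0 : s 0 = 0) (l : ℕ) :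
    s (4 * l + 2) = b + T b := by
  induction l with
  | zero => rw [hs, hs, h0, map_zero, add_zero]
  | succ l ih =>
    rw [show 4 * (l + 1) + 2 = 4 * l + 2 + 4 by ring, affine_quarter_turn_orbit_add_four hT hs, ih]

end QuarterTurn

section FEG

variable {E : Type*} [AddCommGroup E] [Module ℝ E] {L : ℝ} {F : E →ₗ[ℝ] E}

theorem feg_scaled_step (hL : L ≠ 0) (hF : ∀ x, F (F x) = -(L ^ 2) • x) {k : ℝ} (hk : k + 1 ≠ 0)
    {z₀ z w z' : E}
    (hw : w = z + (k + 1)⁻¹ • (z₀ - z) - ((1 - (k + 1)⁻¹) * (1 / L)) • F z)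
    (hz' : z' = z + (k + 1)⁻¹ • (z₀ - z) - (1 / L) • F w) :
    (k + 1) • z' = z₀ - L⁻¹ • F z₀ + (-L⁻¹) • F (k • z) := by
  subst hw hz'
  simp only [map_add, map_sub, map_smul, hF]
  match_scalars <;> field_simp <;> ring

theorem feg_iterate_four_mul_add_two (hL : L ≠ 0) (hF : ∀ x, F (F x) = -(L ^ 2) • x)
    {z₀ : E} {z w : ℕ → E}
    (hw : ∀ k : ℕ, w k = z k + ((k : ℝ) + 1)⁻¹ • (z₀ - z k)
      - ((1 - ((k : ℝ) + 1)⁻¹) * (1 / L)) • F (z k))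
    (hz : ∀ k : ℕ, z (k + 1) = z k + ((k : ℝ) + 1)⁻¹ • (z₀ - z k) - (1 / L) • F (w k))
    (l : ℕ) : (4 * (l : ℝ) + 2) • z (4 * l + 2) = (-(2 / L)) • F z₀ := by
  have hT : ∀ x, (-L⁻¹ • F) ((-L⁻¹ • F) x) = -x := fun x => by
    simp only [LinearMap.smul_apply, map_smul, hF, smul_smul]
    match_scalars; field_simp
  have horbit := affine_quarter_turn_orbit_four_mul_add_two (s := fun k : ℕ => (k : ℝ) • z k) hT
    (fun k => by push_cast; exact feg_scaled_step hL hF (by positivity) (hw k) (hz k))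
    (by simp) l
  push_cast at horbit
  rw [horbit]
  simp only [LinearMap.smul_apply, map_sub, map_smul, hF, smul_smul]
  match_scalars <;> field_simp <;> ring

end FEG

theorem EuclideanSpace.norm_sq_fin_two (v : EuclideanSpace ℝ (Fin 2)) : ‖v‖ ^ 2 = v 0 ^ 2 + v 1 ^ 2 := by
  simp [EuclideanSpace.norm_sq_eq, Fin.sum_univ_two]

theorem feg_worst_case_example_general
    (L : ℝ) (hL : 0 < L)
    (F : EuclideanSpace ℝ (Fin 2) → EuclideanSpace ℝ (Fin 2))
    (hF0 : ∀ v : EuclideanSpace ℝ (Fin 2), F v 0 = L * v 1)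
    (hF1 : ∀ v : EuclideanSpace ℝ (Fin 2), F v 1 = -(L * v 0))
    (z0 : EuclideanSpace ℝ (Fin 2)) (hz00 : z0 0 = 1) (hz01 : z0 1 = 0)
    (z w : ℕ → EuclideanSpace ℝ (Fin 2))
    (hw : ∀ k : ℕ, w k = z k + (((k : ℝ) + 1)⁻¹) • (z0 - z k)
      - ((1 - ((k : ℝ) + 1)⁻¹) * (1 / L + 2 * 0)) • F (z k))
    (hz : ∀ k : ℕ, z (k + 1) = z k + (((k : ℝ) + 1)⁻¹) • (z0 - z k)
      - (1 / L) • F (w k) - ((1 - ((k : ℝ) + 1)⁻¹) * (2 * 0)) • F (z k)) :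
    ∀ l : ℕ,
      z (4 * l + 2) 0 = 0 ∧
      z (4 * l + 2) 1 = 1 / (2 * (l : ℝ) + 1) ∧
      ‖F (z (4 * l + 2))‖ ^ 2 = L ^ 2 / (2 * (l : ℝ) + 1) ^ 2 ∧
      ‖F (z (4 * l + 2))‖ ^ 2
        = 4 * L ^ 2 * ‖z0 - (0 : EuclideanSpace ℝ (Fin 2))‖ ^ 2
          / (4 * (l : ℝ) + 2) ^ 2 := by
  let Flin : EuclideanSpace ℝ (Fin 2) →ₗ[ℝ] EuclideanSpace ℝ (Fin 2) :=
    { toFun := F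
      map_add' := fun u v => by ext i; fin_cases i <;> simp [hF0, hF1] <;> ring
      map_smul' := fun c v => by ext i; fin_cases i <;> simp [hF0, hF1] <;> ring }
  have hFF : ∀ v, Flin (Flin v) = -(L ^ 2) • v := fun v => by
    ext i; fin_cases i <;> simp [Flin, hF0, hF1] <;> ring
  intro l
  have hiter : (4 * (l : ℝ) + 2) • z (4 * l + 2) = (-(2 / L)) • F z0 :=
    feg_iterate_four_mul_add_two (F := Flin) hL.ne' hFF
      (fun k => by simpa [Flin] using hw k) (fun k => by simpa [Flin] using hz k) l
  have hzl : z (4 * l + 2) = (-(L * (2 * l + 1))⁻¹) • F z0 := by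
    rw [← inv_smul_smul₀ (by positivity : 4 * (l : ℝ) + 2 ≠ 0) (z _), hiter, smul_smul]
    congr 1
    field_simp
    ring
  have hx : z (4 * l + 2) 0 = 0 := by simp [hzl, hF0, hz01]
  have hy : z (4 * l + 2) 1 = 1 / (2 * (l : ℝ) + 1) := by
    rw [hzl, PiLp.smul_apply, hF1, hz00, smul_eq_mul]
    field_simp
  refine ⟨hx, hy, ?_, ?_⟩ <;>
    simp only [EuclideanSpace.norm_sq_fin_two, hF0, hF1, hx, hy, sub_zero, hz00, hz01] <;>
    field_simp <;> ring

/-- **Exactness example for FEG** (Example 2 of the paper).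
For `F(x,y) = (L y, -L x)`, the saddle gradient of `f(x,y) = L x y` with zero
`z_* = (0,0)`, the FEG iterates with parameters `L` and `ρ = 0` started from
`z₀ = (1,0)` satisfy `z_{4l+2} = (0, 1/(2l+1))`, hence
`‖F z_{4l+2}‖² = L²/(2l+1)² = 4 L² ‖z₀ - z_*‖²/(4l+2)²` for all `l ≥ 0`. -/
theorem feg_worst_case_example
    (L : ℝ) (hL : 0 < L)
    (F : EuclideanSpace ℝ (Fin 2) → EuclideanSpace ℝ (Fin 2))
    (hF0 : ∀ v : EuclideanSpace ℝ (Fin 2), F v 0 = L * v 1)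
    (hF1 : ∀ v : EuclideanSpace ℝ (Fin 2), F v 1 = -(L * v 0))
    (z0 : EuclideanSpace ℝ (Fin 2)) (hz00 : z0 0 = 1) (hz01 : z0 1 = 0)
    (z w : ℕ → EuclideanSpace ℝ (Fin 2))
    (hz0 : z 0 = z0)
    (hw : ∀ k : ℕ, w k = z k + (((k : ℝ) + 1)⁻¹) • (z0 - z k)
      - ((1 - ((k : ℝ) + 1)⁻¹) * (1 / L + 2 * 0)) • F (z k))
    (hz : ∀ k : ℕ, z (k + 1) = z k + (((k : ℝ) + 1)⁻¹) • (z0 - z k)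
      - (1 / L) • F (w k) - ((1 - ((k : ℝ) + 1)⁻¹) * (2 * 0)) • F (z k)) :
    ∀ l : ℕ,
      z (4 * l + 2) 0 = 0 ∧
      z (4 * l + 2) 1 = 1 / (2 * (l : ℝ) + 1) ∧
      ‖F (z (4 * l + 2))‖ ^ 2 = L ^ 2 / (2 * (l : ℝ) + 1) ^ 2 ∧
      ‖F (z (4 * l + 2))‖ ^ 2
        = 4 * L ^ 2 * ‖z0 - (0 : EuclideanSpace ℝ (Fin 2))‖ ^ 2
          / (4 * (l : ℝ) + 2) ^ 2 :=
  feg_worst_case_example_general L hL F hF0 hF1 z0 hz00 hz01 z w hw hz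
end

section
/- Let δ ∈ (0,1), L > 0 and ρ ∈ ℝ, and let F : ℝ^d → ℝ^d be L-Lipschitz and ρ-comonotone. Let {τ_k}_{k≥−1} and {η_k}_{k≥0} be sequences of positive reals with τ_{−1} > (1−δ)/L and η₀ > (1−δ)²/L + 2(1−δ)ρ, such that for each k ≥ 0 either τ_k = τ_{k−1} or there exist points a, b ∈ ℝ^d with ‖F a − F b‖ > ((1−δ)/τ_k)‖a − b‖, and for each k ≥ 1 either η_k = η_{k−1} or there exist points a, b ∈ ℝ^d and a number τ̂ > (1−δ)/L with ⟨F a − F b, a − b⟩ < ((η_k/(1−δ) − τ̂)/2)‖F a − F b‖². Then τ_k > (1−δ)/L for all k ≥ 0 and η_k > (1−δ)²/L + 2(1−δ)ρ for all k ≥ 0. -/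
open scoped RealInnerProductSpace

/-!
A step size changes only when the check fails at its new value, and a failed check already
places that new value above the threshold: `(1-δ)/τ · ‖a-b‖ < ‖F a - F b‖ ≤ L ‖a-b‖` gives
`(1-δ)/L < τ`, and `ρ ‖F a - F b‖² ≤ ⟪F a - F b, a - b⟫ < ((η/(1-δ) - τ̂)/2) ‖F a - F b‖²` gives
`2ρ + τ̂ < η/(1-δ)`, whence `(1-δ)²/L + 2(1-δ)ρ < η` as `τ̂ > (1-δ)/L`. Induction on `k` finishes.
-/

theorem forall_lt_of_succ_eq_or_lt {α : Type*} [LT α] {c : α} {u : ℕ → α} (h0 : c < u 0)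
    (hstep : ∀ k, u (k + 1) = u k ∨ c < u (k + 1)) : ∀ k, c < u k := by
  intro k
  induction k with
  | zero => exact h0
  | succ k ih => exact (hstep k).elim (fun h => h ▸ ih) id

theorem div_lt_of_lipschitz_violated {E F : Type*} [SeminormedAddCommGroup E]
    [SeminormedAddCommGroup F] {f : E → F} {L c τ : ℝ} (hL : 0 < L) (hτ : 0 < τ)
    (hLip : ∀ z z', ‖f z - f z'‖ ≤ L * ‖z - z'‖) {a b : E}
    (hab : c / τ * ‖a - b‖ < ‖f a - f b‖) :
    c / L < τ := by
  have hcτ : c / τ < L := lt_of_mul_lt_mul_right (hab.trans_le (hLip a b)) (norm_nonneg _)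
  rw [div_lt_iff₀ hτ] at hcτ
  rw [div_lt_iff₀ hL]
  linarith

theorem sq_div_add_lt_of_comonotone_violated {E : Type*} [NormedAddCommGroup E]
    [InnerProductSpace ℝ E] {f : E → E} {L ρ c τhat η : ℝ} (hc : 0 < c) (hτhat : c / L < τhat)
    (hComono : ∀ z z', ρ * ‖f z - f z'‖ ^ 2 ≤ ⟪f z - f z', z - z'⟫) {a b : E}
    (hab : ⟪f a - f b, a - b⟫ < ((η / c - τhat) / 2) * ‖f a - f b‖ ^ 2) :
    c ^ 2 / L + 2 * c * ρ < η := by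
  have hρ : ρ < (η / c - τhat) / 2 :=
    lt_of_mul_lt_mul_right ((hComono a b).trans_lt hab) (by positivity)
  have hsum : (2 * ρ + τhat) * c < η := (lt_div_iff₀ hc).mp (by linarith)
  have hτhat_c : c / L * c < τhat * c := mul_lt_mul_of_pos_right hτhat hc
  calc c ^ 2 / L + 2 * c * ρ = c / L * c + 2 * ρ * c := by ring
    _ < (2 * ρ + τhat) * c := by linarith
    _ < η := hsum

theorem feg_a_step_size_lower_bounds_general
    {d : ℕ}
    (δ L ρ : ℝ) (hδ : δ ∈ Set.Ioo (0 : ℝ) 1) (hL : 0 < L)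
    (F : EuclideanSpace ℝ (Fin d) → EuclideanSpace ℝ (Fin d))
    (hLip : ∀ z z' : EuclideanSpace ℝ (Fin d), ‖F z - F z'‖ ≤ L * ‖z - z'‖)
    (hComono : ∀ z z' : EuclideanSpace ℝ (Fin d),
      ρ * ‖F z - F z'‖ ^ 2 ≤ ⟪F z - F z', z - z'⟫)
    (τ η : ℕ → ℝ)
    (hτpos : ∀ k, 0 < τ k)
    (hτinit : (1 - δ) / L < τ 0)
    (hηinit : (1 - δ) ^ 2 / L + 2 * (1 - δ) * ρ < η 0)
    (hτstep : ∀ k : ℕ, τ (k + 1) = τ k ∨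
      ∃ a b : EuclideanSpace ℝ (Fin d),
        ((1 - δ) / τ (k + 1)) * ‖a - b‖ < ‖F a - F b‖)
    (hηstep : ∀ k : ℕ, η (k + 1) = η k ∨
      ∃ (a b : EuclideanSpace ℝ (Fin d)) (τhat : ℝ), (1 - δ) / L < τhat ∧
        ⟪F a - F b, a - b⟫ < ((η (k + 1) / (1 - δ) - τhat) / 2) * ‖F a - F b‖ ^ 2) :
    (∀ k : ℕ, (1 - δ) / L < τ k) ∧
    (∀ k : ℕ, (1 - δ) ^ 2 / L + 2 * (1 - δ) * ρ < η k) := by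
  have h1δ : 0 < 1 - δ := sub_pos.mpr hδ.2
  refine ⟨forall_lt_of_succ_eq_or_lt hτinit fun k => (hτstep k).imp_right ?_,
    forall_lt_of_succ_eq_or_lt hηinit fun k => (hηstep k).imp_right ?_⟩
  · rintro ⟨a, b, hab⟩
    exact div_lt_of_lipschitz_violated hL (hτpos _) hLip hab
  · rintro ⟨a, b, τhat, hτhat, hab⟩
    exact sq_div_add_lt_of_comonotone_violated h1δ hτhat hComono hab

/-- **Lower bounds for the FEG-A backtracking step sizes** (Lemma 2 of the paper).
Here `τ k` denotes the paper's `τ_{k-1}` (so `τ 0` is the input `τ_{-1}`), while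
`η k` denotes the paper's `η_k` (so `η 0` is the input `η₀`).  Whenever a step
size strictly decreases, the value after the decrease violated the corresponding
Lipschitz (for `τ`) or comonotonicity (for `η`) check.  Then every `τ_k`
(`k ≥ 0`) stays above `(1-δ)/L` and every `η_k` stays above
`(1-δ)²/L + 2(1-δ)ρ`. -/
theorem feg_a_step_size_lower_bounds
    {d : ℕ}
    (δ L ρ : ℝ) (hδ : δ ∈ Set.Ioo (0 : ℝ) 1) (hL : 0 < L)
    (F : EuclideanSpace ℝ (Fin d) → EuclideanSpace ℝ (Fin d))
    (hLip : ∀ z z' : EuclideanSpace ℝ (Fin d), ‖F z - F z'‖ ≤ L * ‖z - z'‖)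
    (hComono : ∀ z z' : EuclideanSpace ℝ (Fin d),
      ρ * ‖F z - F z'‖ ^ 2 ≤ ⟪F z - F z', z - z'⟫)
    (τ η : ℕ → ℝ)
    (hτpos : ∀ k, 0 < τ k) (hηpos : ∀ k, 0 < η k)
    (hτinit : (1 - δ) / L < τ 0)
    (hηinit : (1 - δ) ^ 2 / L + 2 * (1 - δ) * ρ < η 0)
    (hτstep : ∀ k : ℕ, τ (k + 1) = τ k ∨
      ∃ a b : EuclideanSpace ℝ (Fin d),
        ((1 - δ) / τ (k + 1)) * ‖a - b‖ < ‖F a - F b‖)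
    (hηstep : ∀ k : ℕ, η (k + 1) = η k ∨
      ∃ (a b : EuclideanSpace ℝ (Fin d)) (τhat : ℝ), (1 - δ) / L < τhat ∧
        ⟪F a - F b, a - b⟫ < ((η (k + 1) / (1 - δ) - τhat) / 2) * ‖F a - F b‖ ^ 2) :
    (∀ k : ℕ, (1 - δ) / L < τ k) ∧
    (∀ k : ℕ, (1 - δ) ^ 2 / L + 2 * (1 - δ) * ρ < η k) :=
  feg_a_step_size_lower_bounds_general δ L ρ hδ hL F hLip hComono τ η hτpos hτinit hηinit hτstep
    hηstep
end

section
/- Let F : ℝ^d → ℝ^d, z₀ ∈ ℝ^d, and let {α_k}_{k≥0}, {β_k}_{k≥0}, {L_k}_{k≥0} ⊂ (0,∞) and {ρ_k}_{k≥0} ⊂ ℝ satisfy α₀ ∈ (0,∞), α_k ∈ (0, 1/L_k] for k ≥ 1, β₀ = 1, β_k ∈ (0,1) for k ≥ 1, and ((1−β_{k+1})/(2β_{k+1}))(α_{k+1} + 2ρ_{k+1}) − ρ_{k+1} ≤ (1/(2β_k))(α_k + 2ρ_k) − ρ_k for all k ≥ 0. Let the sequences {z_{k+1/2}}, {z_{k+1}}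 be generated by z_{k+1/2} = z_k + β_k(z₀ − z_k) − (1−β_k)(α_k + 2ρ_k) F z_k and z_{k+1} = z_k + β_k(z₀ − z_k) − α_k F z_{k+1/2} − (1−β_k)·2ρ_k·F z_k for k ≥ 0. Assume ‖F z₁ − F z₀‖ ≤ L₀‖z₁ − z₀‖, and for all k ≥ 1 assume ‖F z_{k+1} − F z_{k+1/2}‖ ≤ L_k‖z_{k+1} − z_{k+1/2}‖ and ⟨F z_{k+1} − F z_k, z_{k+1} − z_k⟩ ≥ ρ_k‖F z_{k+1} − F z_k‖². Define a₀ = α₀(L₀²α₀² − 1)/2, b₀ = 0, b₁ = 1, and for k ≥ 1, a_k = (b_k(1−β_k)/(2β_k))(α_k + 2ρ_k) − b_k ρ_k and b_{k+1} = b_k/(1−β_k). Then the potential V_k = a_k‖F z_k‖² − b_k⟨F z_k, z₀ − z_k⟩ satisfies V_k ≤ V_{k−1} for all k ≥ 1. -/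
open scoped RealInnerProductSpace

lemma feg_base (α L a0 a1 P U q : ℝ) (hα : 0 < α) (hP : 0 ≤ P)
    (ha0 : a0 = α * (L ^ 2 * α ^ 2 - 1) / 2) (ha1 : a1 ≤ α / 2)
    (hlip : P - 2 * q + U ≤ L ^ 2 * α ^ 2 * U) :
    a1 * P - α * q ≤ a0 * U := by
  subst ha0
  have h1 := mul_le_mul_of_nonneg_right ha1 hP
  have h2 := mul_le_mul_of_nonneg_left hlip (by linarith : (0:ℝ) ≤ α / 2)
  nlinarith [h1, h2]

lemma feg_step (α β ρ c a a' P U pu pv uv ps us : ℝ)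
    (hc : 0 < c) (hβ0 : 0 < β) (hβ1 : β < 1) (hα : 0 ≤ α)
    (hP : 0 ≤ P) (hU : 0 ≤ U)
    (haa : 2 * β * a = (1 - β) * c * (1 - β) * (α + 2 * ρ) - 2 * β * (1 - β) * c * ρ)
    (ha' : 2 * β * (1 - β) * a' ≤ (1 - β) * c * (α + 2 * ρ) - 2 * β * (1 - β) * c * ρ)
    (h1 : ρ * (P - 2 * pu + U) ≤ β * (ps - us) - α * (pv - uv) - (1 - β) * (2 * ρ) * (pu - U))
    (h2 : P - 2 * pv ≤ (1 - β) ^ 2 * U - 2 * (1 - β) * uv) :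
    a' * P - c * ((1 - β) * ps + α * pv + (1 - β) * (2 * ρ) * pu) ≤ a * U - (1 - β) * c * us := by
  have h1β : (0:ℝ) < 1 - β := by linarith
  have h2β : (0:ℝ) < 2 * β * (1 - β) := by positivity
  have I1 := mul_le_mul_of_nonneg_left h1 (by positivity : (0:ℝ) ≤ 2 * (1 - β) ^ 2 * c)
  have I2 := mul_le_mul_of_nonneg_left h2 (by positivity : (0:ℝ) ≤ (1 - β) * c * α)
  have I3 := mul_le_mul_of_nonneg_right ha' hP
  have haaU := congrArg (fun x => (1 - β) * U * x) haa
  have hT : 2 * β * (1 - β) * (a' * P - c * ((1 - β) * ps + α * pv + (1 - β) * (2 * ρ) * pu))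
      ≤ 2 * β * (1 - β) * (a * U - (1 - β) * c * us) := by linarith [I1, I2, I3, haaU]
  exact le_of_mul_le_mul_left hT h2β

/-- **Nonincreasing potential lemma for Class FEG** (Lemma 1 of the paper).
Under the stated conditions on the step coefficients and the local Lipschitz and
comonotonicity inequalities along the iterates, the potential
`V_k = a_k ‖F z_k‖² - b_k ⟪F z_k, z₀ - z_k⟫` is nonincreasing. -/
theorem feg_potential_nonincreasing
    {d : ℕ}
    (F : EuclideanSpace ℝ (Fin d) → EuclideanSpace ℝ (Fin d))
    (z0 : EuclideanSpace ℝ (Fin d))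
    (α β Lc ρc : ℕ → ℝ)
    (hLpos : ∀ k, 0 < Lc k)
    (hα0 : 0 < α 0)
    (hα : ∀ k : ℕ, 1 ≤ k → 0 < α k ∧ α k ≤ 1 / Lc k)
    (hβ0 : β 0 = 1)
    (hβ : ∀ k : ℕ, 1 ≤ k → β k ∈ Set.Ioo (0 : ℝ) 1)
    (hcoef : ∀ k : ℕ,
      ((1 - β (k + 1)) / (2 * β (k + 1))) * (α (k + 1) + 2 * ρc (k + 1)) - ρc (k + 1)
        ≤ (1 / (2 * β k)) * (α k + 2 * ρc k) - ρc k)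
    (z w : ℕ → EuclideanSpace ℝ (Fin d))
    (hz0 : z 0 = z0)
    (hw : ∀ k : ℕ, w k = z k + β k • (z0 - z k)
      - ((1 - β k) * (α k + 2 * ρc k)) • F (z k))
    (hz : ∀ k : ℕ, z (k + 1) = z k + β k • (z0 - z k)
      - α k • F (w k) - ((1 - β k) * (2 * ρc k)) • F (z k))
    (hlip0 : ‖F (z 1) - F (z 0)‖ ≤ Lc 0 * ‖z 1 - z 0‖)
    (hlip : ∀ k : ℕ, 1 ≤ k → ‖F (z (k + 1)) - F (w k)‖ ≤ Lc k * ‖z (k + 1) - w k‖)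
    (hcomono : ∀ k : ℕ, 1 ≤ k →
      ρc k * ‖F (z (k + 1)) - F (z k)‖ ^ 2
        ≤ ⟪F (z (k + 1)) - F (z k), z (k + 1) - z k⟫)
    (a b : ℕ → ℝ)
    (ha0 : a 0 = α 0 * ((Lc 0) ^ 2 * (α 0) ^ 2 - 1) / 2)
    (hb0 : b 0 = 0) (hb1 : b 1 = 1)
    (ha : ∀ k : ℕ, 1 ≤ k →
      a k = (b k * (1 - β k) / (2 * β k)) * (α k + 2 * ρc k) - b k * ρc k)
    (hb : ∀ k : ℕ, 1 ≤ k → b (k + 1) = b k / (1 - β k)) :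
    ∀ k : ℕ,
      a (k + 1) * ‖F (z (k + 1))‖ ^ 2 - b (k + 1) * ⟪F (z (k + 1)), z0 - z (k + 1)⟫
        ≤ a k * ‖F (z k)‖ ^ 2 - b k * ⟪F (z k), z0 - z k⟫ := by
  have hbpos0 : ∀ m : ℕ, 0 < b (m + 1) := by
    intro m
    induction m with
    | zero => rw [hb1]; norm_num
    | succ n ih =>
        rw [hb (n + 1) (by omega)]
        have h := hβ (n + 1) (by omega)
        exact div_pos ih (by linarith [h.2])
  have hbpos : ∀ m : ℕ, 1 ≤ m → 0 < b m := by
    intro m hm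
    cases m with
    | zero => omega
    | succ i => exact hbpos0 i
  intro k
  rcases k with _ | n
  · -- base case k = 0
    have hw0 : w 0 = z 0 := by
      rw [hw 0, hβ0, ← hz0]; module
    have hz1 : z 1 = z 0 - α 0 • F (z 0) := by
      have h01 := hz 0
      rw [hw0, hβ0, ← hz0] at h01
      rw [h01]; module
    have hd : z0 - z 1 = α 0 • F (z 0) := by
      rw [hz1, ← hz0]; module
    have e2 : ⟪F (z 1), z0 - z 1⟫ = α 0 * ⟪F (z 1), F (z 0)⟫ := by
      rw [hd, real_inner_smul_right]
    have hnd : ‖z 1 - z 0‖ = α 0 * ‖F (z 0)‖ := by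
      have : z 1 - z 0 = -(α 0 • F (z 0)) := by rw [hz1]; module
      rw [this, norm_neg, norm_smul, Real.norm_eq_abs, abs_of_pos hα0]
    have hsq : ‖F (z 1) - F (z 0)‖ ^ 2 ≤ (Lc 0) ^ 2 * (α 0) ^ 2 * ‖F (z 0)‖ ^ 2 := by
      have h1 : ‖F (z 1) - F (z 0)‖ ≤ Lc 0 * (α 0 * ‖F (z 0)‖) := by
        rw [← hnd]; exact hlip0
      calc ‖F (z 1) - F (z 0)‖ ^ 2 ≤ (Lc 0 * (α 0 * ‖F (z 0)‖)) ^ 2 :=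
            pow_le_pow_left₀ (norm_nonneg _) h1 2
        _ = (Lc 0) ^ 2 * (α 0) ^ 2 * ‖F (z 0)‖ ^ 2 := by ring
    have hexp : ‖F (z 1) - F (z 0)‖ ^ 2
        = ‖F (z 1)‖ ^ 2 - 2 * ⟪F (z 1), F (z 0)⟫ + ‖F (z 0)‖ ^ 2 :=
      norm_sub_sq_real _ _
    have ha1 : a 1 ≤ α 0 / 2 := by
      have hc0 := hcoef 0
      rw [hβ0] at hc0
      have e1 : a 1 = (1 - β 1) / (2 * β 1) * (α 1 + 2 * ρc 1) - ρc 1 := by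
        rw [ha 1 le_rfl, hb1]; ring
      rw [e1]; linarith
    have key := feg_base (α 0) (Lc 0) (a 0) (a 1) (‖F (z 1)‖ ^ 2) (‖F (z 0)‖ ^ 2)
      (⟪F (z 1), F (z 0)⟫) hα0 (by positivity) ha0 ha1 (by linarith [hsq, hexp])
    rw [hb0, hb1, e2]
    simp only [zero_add]
    linarith [key]
  · -- step case k = n + 1
    set K := n + 1 with hK
    have hK1 : 1 ≤ K := by omega
    have hβK := hβ K hK1
    have hβK0 : 0 < β K := hβK.1
    have hβK1 : β K < 1 := hβK.2
    have h1β : (0:ℝ) < 1 - β K := by linarith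
    have hαK := hα K hK1
    have hcK : 0 < b (K + 1) := hbpos (K + 1) (by omega)
    have hbKpos : 0 < b K := hbpos K hK1
    have hbc : b K = (1 - β K) * b (K + 1) := by
      rw [hb K hK1]; field_simp
    -- vector identities
    have hzd : z (K + 1) - z K = β K • (z0 - z K) - α K • F (w K)
        - ((1 - β K) * (2 * ρc K)) • F (z K) := by
      rw [hz K]; module
    have hzd2 : z0 - z (K + 1) = (1 - β K) • (z0 - z K) + α K • F (w K)
        + ((1 - β K) * (2 * ρc K)) • F (z K) := by
      rw [hz K]; module
    have hzw : z (K + 1) - w K = α K • ((1 - β K) • F (z K) - F (w K)) := by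
      rw [hz K, hw K]; module
    -- scalar abbreviations
    set p := F (z (K + 1)) with hp
    set u := F (z K) with hu
    set v := F (w K) with hv
    -- comonotonicity scalar form
    have e1 : ⟪p - u, z (K + 1) - z K⟫
        = β K * (⟪p, z0 - z K⟫ - ⟪u, z0 - z K⟫) - α K * (⟪p, v⟫ - ⟪u, v⟫)
          - (1 - β K) * (2 * ρc K) * (⟪p, u⟫ - ‖u‖ ^ 2) := by
      rw [hzd]
      simp only [inner_sub_left, inner_sub_right, real_inner_smul_right,
        real_inner_self_eq_norm_sq]
      ring
    have e1' : ‖p - u‖ ^ 2 = ‖p‖ ^ 2 - 2 * ⟪p, u⟫ + ‖u‖ ^ 2 := norm_sub_sq_real _ _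
    have hco := hcomono K hK1
    rw [e1, e1'] at hco
    -- Lipschitz scalar form
    have hnw : ‖z (K + 1) - w K‖ = α K * ‖(1 - β K) • u - v‖ := by
      rw [hzw, norm_smul, Real.norm_eq_abs, abs_of_pos hαK.1]
    have hαL : α K * Lc K ≤ 1 := by
      have := hαK.2
      rw [le_div_iff₀ (hLpos K)] at this
      linarith
    have hch : ‖p - v‖ ≤ ‖(1 - β K) • u - v‖ := by
      calc ‖p - v‖ ≤ Lc K * (α K * ‖(1 - β K) • u - v‖) := by
            rw [← hnw]; exact hlip K hK1
        _ = (α K * Lc K) * ‖(1 - β K) • u - v‖ := by ring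
        _ ≤ 1 * ‖(1 - β K) • u - v‖ :=
            mul_le_mul_of_nonneg_right hαL (norm_nonneg _)
        _ = ‖(1 - β K) • u - v‖ := one_mul _
    have hsq : ‖p - v‖ ^ 2 ≤ ‖(1 - β K) • u - v‖ ^ 2 :=
      pow_le_pow_left₀ (norm_nonneg _) hch 2
    have ex1 : ‖p - v‖ ^ 2 = ‖p‖ ^ 2 - 2 * ⟪p, v⟫ + ‖v‖ ^ 2 := norm_sub_sq_real _ _
    have ex2 : ‖(1 - β K) • u - v‖ ^ 2
        = (1 - β K) ^ 2 * ‖u‖ ^ 2 - 2 * ((1 - β K) * ⟪u, v⟫) + ‖v‖ ^ 2 := by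
      rw [norm_sub_sq_real, real_inner_smul_left, norm_smul, Real.norm_eq_abs, mul_pow, sq_abs]
    have h2 : ‖p‖ ^ 2 - 2 * ⟪p, v⟫ ≤ (1 - β K) ^ 2 * ‖u‖ ^ 2 - 2 * ((1 - β K) * ⟪u, v⟫) := by
      rw [ex1, ex2] at hsq; linarith
    -- coefficient inequalities
    have hβne : β K ≠ 0 := ne_of_gt hβK0
    have haa : 2 * β K * a K = (1 - β K) * b (K + 1) * (1 - β K) * (α K + 2 * ρc K)
        - 2 * β K * (1 - β K) * b (K + 1) * ρc K := by
      rw [ha K hK1, hbc]; field_simp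
    have ha' : 2 * β K * (1 - β K) * a (K + 1)
        ≤ (1 - β K) * b (K + 1) * (α K + 2 * ρc K)
          - 2 * β K * (1 - β K) * b (K + 1) * ρc K := by
      have h5 : a (K + 1) = b (K + 1)
          * (((1 - β (K + 1)) / (2 * β (K + 1))) * (α (K + 1) + 2 * ρc (K + 1)) - ρc (K + 1)) := by
        rw [ha (K + 1) (by omega)]; ring
      have h6 : a (K + 1) ≤ b (K + 1) * ((1 / (2 * β K)) * (α K + 2 * ρc K) - ρc K) := by
        rw [h5]
        exact mul_le_mul_of_nonneg_left (hcoef K) hcK.le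
      have h7 : 2 * β K * (1 - β K) * (b (K + 1) * ((1 / (2 * β K)) * (α K + 2 * ρc K) - ρc K))
          = (1 - β K) * b (K + 1) * (α K + 2 * ρc K)
            - 2 * β K * (1 - β K) * b (K + 1) * ρc K := by
        field_simp
      calc 2 * β K * (1 - β K) * a (K + 1)
          ≤ 2 * β K * (1 - β K) * (b (K + 1) * ((1 / (2 * β K)) * (α K + 2 * ρc K) - ρc K)) :=
            mul_le_mul_of_nonneg_left h6 (by positivity)
        _ = _ := h7
    -- main inequality
    have h1 : ρc K * (‖p‖ ^ 2 - 2 * ⟪p, u⟫ + ‖u‖ ^ 2)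
        ≤ β K * (⟪p, z0 - z K⟫ - ⟪u, z0 - z K⟫) - α K * (⟪p, v⟫ - ⟪u, v⟫)
          - (1 - β K) * (2 * ρc K) * (⟪p, u⟫ - ‖u‖ ^ 2) := hco
    have main := feg_step (α K) (β K) (ρc K) (b (K + 1)) (a K) (a (K + 1))
      (‖p‖ ^ 2) (‖u‖ ^ 2) (⟪p, u⟫) (⟪p, v⟫) (⟪u, v⟫) (⟪p, z0 - z K⟫) (⟪u, z0 - z K⟫)
      hcK hβK0 hβK1 hαK.1.le (by positivity) (by positivity) haa ha' h1 (by linarith [h2])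
    have e2 : ⟪p, z0 - z (K + 1)⟫
        = (1 - β K) * ⟪p, z0 - z K⟫ + α K * ⟪p, v⟫ + (1 - β K) * (2 * ρc K) * ⟪p, u⟫ := by
      rw [hzd2]
      simp only [inner_add_right, real_inner_smul_right]
    rw [e2, hbc]
    linarith [main]
end

section
/- Under the hypotheses of the nonincreasing potential lemma (sequences α_k, β_k, L_k, ρ_k with α₀ > 0, α_k ∈ (0, 1/L_k] and β_k ∈ (0,1) for k ≥ 1, β₀ = 1, coefficient condition ((1−β_{k+1})/(2β_{k+1}))(α_{k+1} + 2ρ_{k+1}) − ρ_{k+1} ≤ (1/(2β_k))(α_k + 2ρ_k) − ρ_k; iterates generated by the Class-FEG recursion; local Lipschitz inequality ‖F z_{k+1} − F z_{k+1/2}‖ ≤ L_k‖z_{k+1} − z_{k+1/2}‖ and local comonotonicity ⟨F z_{k+1} − F z_k, z_{k+1} − z_k⟩ ≥ ρ_k‖F z_{k+1} − F z_k‖² for k ≥ 1), the potential V_k = a_k‖F z_k‖² − b_k⟨F z_k, z₀ − z_k⟩ with b₁ = 1, b_{k+1} = b_k/(1−β_k), a_k = (b_k(1−β_k)/(2β_k))(α_k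 + 2ρ_k) − b_k ρ_k satisfies, for every k ≥ 1, the quantitative decrease V_k − V_{k+1} ≥ (b_k(1 − L_k²α_k²)/(2 L_k² α_k β_k (1−β_k))) · ‖F z_{k+1} − F z_{k+1/2}‖². -/
open scoped RealInnerProductSpace

set_option maxHeartbeats 1000000

/-- **Quantitative potential decrease for Class FEG** (from the proof of Lemma 1).
Under the hypotheses of the nonincreasing potential lemma, for every `k ≥ 1`,
`V_k - V_{k+1} ≥ (b_k (1 - L_k² α_k²) / (2 L_k² α_k β_k (1 - β_k))) ‖F z_{k+1} - F z_{k+1/2}‖²`. -/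
theorem feg_potential_quantitative_decrease
    {d : ℕ}
    (F : EuclideanSpace ℝ (Fin d) → EuclideanSpace ℝ (Fin d))
    (z0 : EuclideanSpace ℝ (Fin d))
    (α β Lc ρc : ℕ → ℝ)
    (hLpos : ∀ k, 0 < Lc k)
    (hα0 : 0 < α 0)
    (hα : ∀ k : ℕ, 1 ≤ k → 0 < α k ∧ α k ≤ 1 / Lc k)
    (hβ0 : β 0 = 1)
    (hβ : ∀ k : ℕ, 1 ≤ k → β k ∈ Set.Ioo (0 : ℝ) 1)
    (hcoef : ∀ k : ℕ,
      ((1 - β (k + 1)) / (2 * β (k + 1))) * (α (k + 1) + 2 * ρc (k + 1)) - ρc (k + 1)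
        ≤ (1 / (2 * β k)) * (α k + 2 * ρc k) - ρc k)
    (z w : ℕ → EuclideanSpace ℝ (Fin d))
    (hz0 : z 0 = z0)
    (hw : ∀ k : ℕ, w k = z k + β k • (z0 - z k)
      - ((1 - β k) * (α k + 2 * ρc k)) • F (z k))
    (hz : ∀ k : ℕ, z (k + 1) = z k + β k • (z0 - z k)
      - α k • F (w k) - ((1 - β k) * (2 * ρc k)) • F (z k))
    (hlip : ∀ k : ℕ, 1 ≤ k → ‖F (z (k + 1)) - F (w k)‖ ≤ Lc k * ‖z (k + 1) - w k‖)
    (hcomono : ∀ k : ℕ, 1 ≤ k →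
      ρc k * ‖F (z (k + 1)) - F (z k)‖ ^ 2
        ≤ ⟪F (z (k + 1)) - F (z k), z (k + 1) - z k⟫)
    (a b : ℕ → ℝ)
    (hb1 : b 1 = 1)
    (ha : ∀ k : ℕ, 1 ≤ k →
      a k = (b k * (1 - β k) / (2 * β k)) * (α k + 2 * ρc k) - b k * ρc k)
    (hb : ∀ k : ℕ, 1 ≤ k → b (k + 1) = b k / (1 - β k)) :
    ∀ k : ℕ, 1 ≤ k →
      (b k * (1 - (Lc k) ^ 2 * (α k) ^ 2)
          / (2 * (Lc k) ^ 2 * α k * β k * (1 - β k)))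
            * ‖F (z (k + 1)) - F (w k)‖ ^ 2
        ≤ (a k * ‖F (z k)‖ ^ 2 - b k * ⟪F (z k), z0 - z k⟫)
          - (a (k + 1) * ‖F (z (k + 1))‖ ^ 2
              - b (k + 1) * ⟪F (z (k + 1)), z0 - z (k + 1)⟫) := by
  -- positivity of b k for k ≥ 1
  have hbpos : ∀ k : ℕ, 1 ≤ k → 0 < b k := by
    intro k hk
    induction k with
    | zero => omega
    | succ n ih =>
      by_cases h : 1 ≤ n
      · rw [hb n h]
        have h1 := (hβ n h).2
        exact div_pos (ih h) (by linarith)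
      · have hn0 : n = 0 := by omega
        subst hn0
        rw [hb1]; norm_num
  intro k hk
  obtain ⟨hB0, hB1⟩ := hβ k hk
  obtain ⟨hA0, hAL⟩ := hα k hk
  have hL := hLpos k
  have hbb := hbpos k hk
  have h1B : (0:ℝ) < 1 - β k := by linarith
  -- vector identities
  have hzw : z (k+1) - w k = α k • ((1 - β k) • F (z k) - F (w k)) := by
    rw [hz k, hw k]; module
  have hzz : z (k+1) - z k
      = β k • (z0 - z k) - α k • F (w k) - ((1 - β k) * (2 * ρc k)) • F (z k) := by
    rw [hz k]; module
  have hz0z : z0 - z (k+1)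
      = (1 - β k) • (z0 - z k) + α k • F (w k)
        + ((1 - β k) * (2 * ρc k)) • F (z k) := by
    rw [hz k]; module
  -- norm expansions
  have hYeq : ‖F (z (k+1)) - F (w k)‖^2
      = ‖F (z (k+1))‖^2 - 2*⟪F (z (k+1)), F (w k)⟫ + ‖F (w k)‖^2 :=
    norm_sub_sq_real _ _
  have hXeq : ‖(1 - β k) • F (z k) - F (w k)‖^2
      = (1 - β k)^2*‖F (z k)‖^2 - 2*((1 - β k)*⟪F (z k), F (w k)⟫) + ‖F (w k)‖^2 := by
    rw [norm_sub_sq_real, real_inner_smul_left, norm_smul, Real.norm_eq_abs, mul_pow, sq_abs]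
  -- Lipschitz, squared
  have key := hlip k hk
  rw [hzw, norm_smul, Real.norm_eq_abs, abs_of_pos hA0] at key
  have h2 : ‖F (z (k+1)) - F (w k)‖^2
      ≤ (Lc k)^2*(α k)^2*‖(1 - β k) • F (z k) - F (w k)‖^2 := by
    nlinarith [mul_self_le_mul_self (norm_nonneg (F (z (k+1)) - F (w k))) key,
      norm_nonneg ((1 - β k) • F (z k) - F (w k)), hL, hA0]
  -- comonotonicity, expanded
  have hcm' : ρc k * (‖F (z (k+1))‖^2 - 2*⟪F (z (k+1)), F (z k)⟫ + ‖F (z k)‖^2)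
      ≤ β k * (⟪F (z (k+1)), z0 - z k⟫ - ⟪F (z k), z0 - z k⟫)
        - α k * (⟪F (z (k+1)), F (w k)⟫ - ⟪F (z k), F (w k)⟫)
        - (1 - β k) * (2 * ρc k) * (⟪F (z (k+1)), F (z k)⟫ - ‖F (z k)‖^2) := by
    have e1 : ⟪F (z (k+1)) - F (z k), β k • (z0 - z k) - α k • F (w k)
          - ((1 - β k) * (2 * ρc k)) • F (z k)⟫
        = β k * (⟪F (z (k+1)), z0 - z k⟫ - ⟪F (z k), z0 - z k⟫)
          - α k * (⟪F (z (k+1)), F (w k)⟫ - ⟪F (z k), F (w k)⟫)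
          - (1 - β k) * (2 * ρc k) * (⟪F (z (k+1)), F (z k)⟫ - ‖F (z k)‖^2) := by
      simp only [inner_sub_left, inner_sub_right, real_inner_smul_right,
        real_inner_self_eq_norm_sq]
      ring
    have hcm := hcomono k hk
    rw [hzz, e1, norm_sub_sq_real] at hcm
    exact hcm
  have s4 : (b k / β k) * (ρc k * (‖F (z (k+1))‖^2 - 2*⟪F (z (k+1)), F (z k)⟫ + ‖F (z k)‖^2))
      ≤ (b k / β k) * (β k * (⟪F (z (k+1)), z0 - z k⟫ - ⟪F (z k), z0 - z k⟫)
        - α k * (⟪F (z (k+1)), F (w k)⟫ - ⟪F (z k), F (w k)⟫)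
        - (1 - β k) * (2 * ρc k) * (⟪F (z (k+1)), F (z k)⟫ - ‖F (z k)‖^2)) :=
    mul_le_mul_of_nonneg_left hcm' (by positivity)
  -- coefficient bound for a (k+1)
  have hb' : 0 < b (k+1) := hbpos (k+1) (by omega)
  have s5' : a (k+1) ≤ (b k / (1 - β k)) * (1/(2*β k)*(α k + 2*ρc k) - ρc k) := by
    rw [ha (k+1) (by omega), ← hb k hk]
    have h := mul_le_mul_of_nonneg_left (hcoef k) hb'.le
    have heq : b (k+1) * (1 - β (k+1)) / (2 * β (k+1)) * (α (k+1) + 2 * ρc (k+1))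
          - b (k+1) * ρc (k+1)
        = b (k+1) * ((1 - β (k+1)) / (2 * β (k+1)) * (α (k+1) + 2 * ρc (k+1))
            - ρc (k+1)) := by ring
    rw [heq]
    exact h
  have s5 : a (k+1) * ‖F (z (k+1))‖^2
      ≤ ((b k / (1 - β k)) * (1/(2*β k)*(α k + 2*ρc k) - ρc k)) * ‖F (z (k+1))‖^2 :=
    mul_le_mul_of_nonneg_right s5' (by positivity)
  -- nonzero facts
  have hLne : Lc k ≠ 0 := ne_of_gt hL
  have hAne : α k ≠ 0 := ne_of_gt hA0
  have hBne : β k ≠ 0 := ne_of_gt hB0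
  have h1Bne : (1 - β k) ≠ 0 := ne_of_gt h1B
  -- nonnegativity of the front factor
  have hLA : α k * Lc k ≤ 1 := (le_div_iff₀ hL).mp hAL
  have hT : 0 ≤ b k * (1 - (Lc k)^2*(α k)^2) / (2*(Lc k)^2*α k*β k*(1 - β k)) := by
    have h1 : 0 ≤ 1 - (Lc k)^2*(α k)^2 := by
      nlinarith [mul_self_le_mul_self (mul_nonneg hA0.le hL.le) hLA]
    positivity
  have s0 : (b k * (1 - (Lc k)^2*(α k)^2) / (2*(Lc k)^2*α k*β k*(1 - β k)))
        * ‖F (z (k+1)) - F (w k)‖^2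
      ≤ (b k * (1 - (Lc k)^2*(α k)^2) / (2*(Lc k)^2*α k*β k*(1 - β k)))
        * ((Lc k)^2*(α k)^2*‖(1 - β k) • F (z k) - F (w k)‖^2) :=
    mul_le_mul_of_nonneg_left h2 hT
  have s1 : (b k * α k/(2*β k*(1 - β k))) * ‖F (z (k+1)) - F (w k)‖^2
      ≤ (b k * α k/(2*β k*(1 - β k)))
        * ((Lc k)^2*(α k)^2*‖(1 - β k) • F (z k) - F (w k)‖^2) :=
    mul_le_mul_of_nonneg_left h2 (by positivity)
  have sid : (b k * (1 - (Lc k)^2*(α k)^2) / (2*(Lc k)^2*α k*β k*(1 - β k)))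
        * ((Lc k)^2*(α k)^2*‖(1 - β k) • F (z k) - F (w k)‖^2)
      + (b k * α k/(2*β k*(1 - β k)))
        * ((Lc k)^2*(α k)^2*‖(1 - β k) • F (z k) - F (w k)‖^2)
      = (b k * α k/(2*β k*(1 - β k))) * ‖(1 - β k) • F (z k) - F (w k)‖^2 := by
    field_simp
    ring
  -- the central algebraic identity
  have sE : (b k * α k/(2*β k*(1 - β k))) * ‖(1 - β k) • F (z k) - F (w k)‖^2
      - (b k * α k/(2*β k*(1 - β k))) * ‖F (z (k+1)) - F (w k)‖^2
      = ((b k * (1 - β k) / (2 * β k)) * (α k + 2 * ρc k) - b k * ρc k) * ‖F (z k)‖^2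
        - ((b k / (1 - β k)) * (1/(2*β k)*(α k + 2*ρc k) - ρc k)) * ‖F (z (k+1))‖^2
        + (b k / β k) * (ρc k * (‖F (z (k+1))‖^2 - 2*⟪F (z (k+1)), F (z k)⟫ + ‖F (z k)‖^2))
        - (b k / β k) * (β k * (⟪F (z (k+1)), z0 - z k⟫ - ⟪F (z k), z0 - z k⟫)
            - α k * (⟪F (z (k+1)), F (w k)⟫ - ⟪F (z k), F (w k)⟫)
            - (1 - β k) * (2 * ρc k) * (⟪F (z (k+1)), F (z k)⟫ - ‖F (z k)‖^2))
        + b k * (⟪F (z (k+1)), z0 - z k⟫ - ⟪F (z k), z0 - z k⟫)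
        + (b k / (1 - β k)) * (α k * ⟪F (z (k+1)), F (w k)⟫)
        + 2 * b k * ρc k * ⟪F (z (k+1)), F (z k)⟫ := by
    rw [hXeq, hYeq]
    field_simp
    ring
  -- expand the goal's inner product and rewrite coefficients
  have e2 : ⟪F (z (k+1)), (1 - β k) • (z0 - z k) + α k • F (w k)
        + ((1 - β k) * (2 * ρc k)) • F (z k)⟫
      = (1 - β k) * ⟪F (z (k+1)), z0 - z k⟫ + α k * ⟪F (z (k+1)), F (w k)⟫
        + ((1 - β k) * (2 * ρc k)) * ⟪F (z (k+1)), F (z k)⟫ := by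
    simp only [inner_add_right, real_inner_smul_right]
  have s6 : (b k / (1 - β k)) * ((1 - β k) * ⟪F (z (k+1)), z0 - z k⟫
        + α k * ⟪F (z (k+1)), F (w k)⟫
        + ((1 - β k) * (2 * ρc k)) * ⟪F (z (k+1)), F (z k)⟫)
      = b k * ⟪F (z (k+1)), z0 - z k⟫
        + (b k / (1 - β k)) * (α k * ⟪F (z (k+1)), F (w k)⟫)
        + 2 * b k * ρc k * ⟪F (z (k+1)), F (z k)⟫ := by
    field_simp
  rw [ha k hk, hb k hk, hz0z, e2]
  linarith [s0, s1, sid, sE, s4, s5, s6]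
end

section
/- Let F : ℝ^d → ℝ^d, z₀ ∈ ℝ^d, α₀, L₀ > 0, and let z₁ = z₀ − α₀ F z₀ satisfy ‖F z₁ − F z₀‖ ≤ L₀‖z₁ − z₀‖. Let α₁ > 0, β₁ ∈ (0,1), ρ₁ ∈ ℝ and ρ₀ ∈ ℝ satisfy ((1−β₁)/(2β₁))(α₁ + 2ρ₁) − ρ₁ ≤ (1/2)(α₀ + 2ρ₀) − ρ₀ = α₀/2. Then, with a₁ = ((1−β₁)/(2β₁))(α₁ + 2ρ₁) − ρ₁, the potential V₁ = a₁‖F z₁‖² − ⟨F z₁, z₀ − z₁⟩ satisfies V₁ ≤ (α₀(L₀²α₀² − 1)/2)‖F z₀‖². -/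
open scoped RealInnerProductSpace

/-- **Base case of the nonincreasing potential lemma** (`k = 0` to `k = 1`).
With `z₁ = z₀ - α₀ F z₀` satisfying the local Lipschitz bound, and step
coefficients satisfying the coefficient condition, the potential
`V₁ = a₁ ‖F z₁‖² - ⟪F z₁, z₀ - z₁⟫` is at most
`V₀ = (α₀ (L₀² α₀² - 1)/2) ‖F z₀‖²`. -/
theorem feg_potential_base_case
    {d : ℕ}
    (F : EuclideanSpace ℝ (Fin d) → EuclideanSpace ℝ (Fin d))
    (z0 : EuclideanSpace ℝ (Fin d))
    (α0 L0 : ℝ) (hα0 : 0 < α0) (hL0 : 0 < L0)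
    (z1 : EuclideanSpace ℝ (Fin d))
    (hz1 : z1 = z0 - α0 • F z0)
    (hlip : ‖F z1 - F z0‖ ≤ L0 * ‖z1 - z0‖)
    (α1 β1 ρ1 ρ0 : ℝ) (hα1 : 0 < α1) (hβ1 : β1 ∈ Set.Ioo (0 : ℝ) 1)
    (hcoef : ((1 - β1) / (2 * β1)) * (α1 + 2 * ρ1) - ρ1
      ≤ (1 / 2) * (α0 + 2 * ρ0) - ρ0) :
    (((1 - β1) / (2 * β1)) * (α1 + 2 * ρ1) - ρ1) * ‖F z1‖ ^ 2 - ⟪F z1, z0 - z1⟫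
      ≤ (α0 * (L0 ^ 2 * α0 ^ 2 - 1) / 2) * ‖F z0‖ ^ 2 := by
  have hz : z0 - z1 = α0 • F z0 := by rw [hz1]; abel
  have hd : z1 - z0 = (-α0) • F z0 := by rw [hz1]; module
  have hnorm : ‖z1 - z0‖ = α0 * ‖F z0‖ := by
    rw [hd, norm_smul, Real.norm_eq_abs, abs_neg, abs_of_pos hα0]
  have hinner : ⟪F z1, z0 - z1⟫ = α0 * ⟪F z1, F z0⟫ := by
    rw [hz, real_inner_smul_right]
  have hsq : ‖F z1 - F z0‖ ^ 2 ≤ L0 ^ 2 * α0 ^ 2 * ‖F z0‖ ^ 2 := by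
    have h := mul_self_le_mul_self (norm_nonneg _) hlip
    rw [hnorm] at h
    nlinarith
  have hexp : ‖F z1 - F z0‖ ^ 2 = ‖F z1‖ ^ 2 - 2 * ⟪F z1, F z0⟫ + ‖F z0‖ ^ 2 := by
    rw [norm_sub_sq_real]
  have ha1 : ((1 - β1) / (2 * β1)) * (α1 + 2 * ρ1) - ρ1 ≤ α0 / 2 := by linarith
  rw [hinner]
  nlinarith [sq_nonneg ‖F z1‖, mul_le_mul_of_nonneg_right ha1 (sq_nonneg ‖F z1‖)]
end

section
/- Let L > 0, ρ ∈ ℝ, and let F : ℝ^d → ℝ^d be L-Lipschitz and ρ-comonotone. Then for any z₀ ∈ ℝ^d, the FEG iterates {z_k}_{k≥0} satisfy, for all k ≥ 1, ((k²/2)(1/L + 2ρ) − kρ)‖F z_k‖² ≤ k⟨F z_k, z₀ − z_k⟩ (equivalently, the potential V_k = ((k²/2)(1/L + 2ρ) − kρ)‖F z_k‖² − k⟨F z_k, z₀ − z_k⟩ is nonpositive). -/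
open scoped RealInnerProductSpace

set_option maxHeartbeats 1000000 in
private lemma feg_step_s7 {E : Type*} [NormedAddCommGroup E] [InnerProductSpace ℝ E]
    (L ρ n : ℝ) (hL : 0 < L) (hn : 0 ≤ n)
    (u a b c : E)
    (hLip2 : ‖c - b‖ ≤ ‖(1 - (n+1)⁻¹) • a - b‖)
    (hCom : ρ * ‖c - a‖ ^ 2 ≤ ⟪c - a, (n+1)⁻¹ • u - (1/L) • b - ((1-(n+1)⁻¹)*(2*ρ)) • a⟫)
    (hV : (n ^ 2 / 2 * (1/L + 2*ρ) - n * ρ) * ‖a‖ ^ 2 - n * ⟪a, u⟫ ≤ 0) :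
    ((n+1) ^ 2 / 2 * (1/L + 2*ρ) - (n+1) * ρ) * ‖c‖ ^ 2
      - (n+1) * ⟪c, u - ((n+1)⁻¹ • u - (1/L) • b - ((1-(n+1)⁻¹)*(2*ρ)) • a)⟫ ≤ 0 := by
  have hm : n + 1 ≠ 0 := by positivity
  have hL0 : L ≠ 0 := ne_of_gt hL
  have hsm : ‖(1 - (n+1)⁻¹) • a‖ ^ 2 = (1 - (n+1)⁻¹) ^ 2 * ‖a‖ ^ 2 := by
    rw [norm_smul, mul_pow, Real.norm_eq_abs, sq_abs]
  have hL2 : ‖c - b‖ ^ 2 ≤ ‖(1 - (n+1)⁻¹) • a - b‖ ^ 2 :=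
    pow_le_pow_left₀ (norm_nonneg _) hLip2 2
  have e1 : ‖c - b‖ ^ 2 = ‖c‖ ^ 2 - 2 * ⟪b, c⟫ + ‖b‖ ^ 2 := by
    rw [norm_sub_sq_real, real_inner_comm b c]
  have e2 : ‖(1 - (n+1)⁻¹) • a - b‖ ^ 2
      = (1 - (n+1)⁻¹) ^ 2 * ‖a‖ ^ 2 - 2 * ((1 - (n+1)⁻¹) * ⟪a, b⟫) + ‖b‖ ^ 2 := by
    rw [norm_sub_sq_real, hsm, real_inner_smul_left]
  have e3 : ‖c - a‖ ^ 2 = ‖c‖ ^ 2 - 2 * ⟪a, c⟫ + ‖a‖ ^ 2 := by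
    rw [norm_sub_sq_real, real_inner_comm a c]
  have e4 : ⟪c - a, (n+1)⁻¹ • u - (1/L) • b - ((1-(n+1)⁻¹)*(2*ρ)) • a⟫
      = (n+1)⁻¹ * (⟪c, u⟫ - ⟪a, u⟫) - (1/L) * (⟪b, c⟫ - ⟪a, b⟫)
        - (1-(n+1)⁻¹) * (2*ρ) * (⟪a, c⟫ - ‖a‖ ^ 2) := by
    simp only [inner_sub_left, inner_sub_right, real_inner_smul_right,
      real_inner_self_eq_norm_sq]
    rw [real_inner_comm b c, real_inner_comm a c]
    ring
  have e5 : ⟪c, u - ((n+1)⁻¹ • u - (1/L) • b - ((1-(n+1)⁻¹)*(2*ρ)) • a)⟫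
      = ⟪c, u⟫ - (n+1)⁻¹ * ⟪c, u⟫ + (1/L) * ⟪b, c⟫
        + (1-(n+1)⁻¹) * (2*ρ) * ⟪a, c⟫ := by
    simp only [inner_sub_right, inner_add_right, real_inner_smul_right]
    rw [real_inner_comm b c, real_inner_comm a c]
    ring
  rw [e5]
  rw [e3, e4] at hCom
  rw [e1, e2] at hL2
  -- the key algebraic identity
  have key : ((n+1) ^ 2 / 2 * (1/L + 2*ρ) - (n+1) * ρ) * ‖c‖ ^ 2
      - (n+1) * (⟪c, u⟫ - (n+1)⁻¹ * ⟪c, u⟫ + (1/L) * ⟪b, c⟫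
        + (1-(n+1)⁻¹) * (2*ρ) * ⟪a, c⟫)
      = ((n ^ 2 / 2 * (1/L + 2*ρ) - n * ρ) * ‖a‖ ^ 2 - n * ⟪a, u⟫)
        - (n * (n+1)) * (((n+1)⁻¹ * (⟪c, u⟫ - ⟪a, u⟫) - (1/L) * (⟪b, c⟫ - ⟪a, b⟫)
            - (1-(n+1)⁻¹) * (2*ρ) * (⟪a, c⟫ - ‖a‖ ^ 2))
            - ρ * (‖c‖ ^ 2 - 2 * ⟪a, c⟫ + ‖a‖ ^ 2))
        - ((n+1) ^ 2 / (2 * L)) * (((1 - (n+1)⁻¹) ^ 2 * ‖a‖ ^ 2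
            - 2 * ((1 - (n+1)⁻¹) * ⟪a, b⟫) + ‖b‖ ^ 2)
            - (‖c‖ ^ 2 - 2 * ⟪b, c⟫ + ‖b‖ ^ 2)) := by
    field_simp
    ring
  rw [key]
  have hC1 : 0 ≤ ((n+1)⁻¹ * (⟪c, u⟫ - ⟪a, u⟫) - (1/L) * (⟪b, c⟫ - ⟪a, b⟫)
      - (1-(n+1)⁻¹) * (2*ρ) * (⟪a, c⟫ - ‖a‖ ^ 2))
      - ρ * (‖c‖ ^ 2 - 2 * ⟪a, c⟫ + ‖a‖ ^ 2) := by linarith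
  have hC2 : 0 ≤ ((1 - (n+1)⁻¹) ^ 2 * ‖a‖ ^ 2
      - 2 * ((1 - (n+1)⁻¹) * ⟪a, b⟫) + ‖b‖ ^ 2)
      - (‖c‖ ^ 2 - 2 * ⟪b, c⟫ + ‖b‖ ^ 2) := by linarith
  have hp1 : 0 ≤ n * (n+1) := by positivity
  have hp2 : 0 ≤ (n+1) ^ 2 / (2 * L) := by positivity
  nlinarith [mul_nonneg hp1 hC1, mul_nonneg hp2 hC2]

/-- **Nonpositivity of the FEG potential** (from the proof of Theorem 1).
For an `L`-Lipschitz and `ρ`-comonotone operator `F`, the FEG iterates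
satisfy `((k²/2)(1/L + 2ρ) - kρ) ‖F z_k‖² ≤ k ⟪F z_k, z₀ - z_k⟫` for all
`k ≥ 1`, i.e. the potential `V_k` is nonpositive. -/
theorem feg_potential_nonpositive
    {d : ℕ}
    (L ρ : ℝ) (hL : 0 < L)
    (F : EuclideanSpace ℝ (Fin d) → EuclideanSpace ℝ (Fin d))
    (hLip : ∀ z z' : EuclideanSpace ℝ (Fin d), ‖F z - F z'‖ ≤ L * ‖z - z'‖)
    (hComono : ∀ z z' : EuclideanSpace ℝ (Fin d),
      ρ * ‖F z - F z'‖ ^ 2 ≤ ⟪F z - F z', z - z'⟫)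
    (z0 : EuclideanSpace ℝ (Fin d))
    (z w : ℕ → EuclideanSpace ℝ (Fin d))
    (hz0 : z 0 = z0)
    (hw : ∀ k : ℕ, w k = z k + (((k : ℝ) + 1)⁻¹) • (z0 - z k)
      - ((1 - ((k : ℝ) + 1)⁻¹) * (1 / L + 2 * ρ)) • F (z k))
    (hz : ∀ k : ℕ, z (k + 1) = z k + (((k : ℝ) + 1)⁻¹) • (z0 - z k)
      - (1 / L) • F (w k) - ((1 - ((k : ℝ) + 1)⁻¹) * (2 * ρ)) • F (z k)) :
    ∀ k : ℕ, 1 ≤ k →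
      ((k : ℝ) ^ 2 / 2 * (1 / L + 2 * ρ) - (k : ℝ) * ρ) * ‖F (z k)‖ ^ 2
        ≤ (k : ℝ) * ⟪F (z k), z0 - z k⟫ := by
  have hL0 : L ≠ 0 := ne_of_gt hL
  have main : ∀ k : ℕ,
      ((k : ℝ) ^ 2 / 2 * (1 / L + 2 * ρ) - (k : ℝ) * ρ) * ‖F (z k)‖ ^ 2
        - (k : ℝ) * ⟪F (z k), z0 - z k⟫ ≤ 0 := by
    intro k
    induction k with
    | zero => simp
    | succ k ih =>
      have hn0 : (0:ℝ) ≤ (k : ℝ) := Nat.cast_nonneg k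
      have hzk := hz k
      have hwk := hw k
      set b := F (w k) with hb
      -- displacement identities
      have hdz : z (k+1) - z k
          = ((k : ℝ)+1)⁻¹ • (z0 - z k) - (1/L) • b
            - ((1-((k : ℝ)+1)⁻¹)*(2*ρ)) • F (z k) := by
        rw [hzk]; abel
      have hdw : z (k+1) - w k
          = (1/L) • ((1 - ((k : ℝ)+1)⁻¹) • F (z k) - b) := by
        rw [hzk, hwk]
        match_scalars <;> ring
      have hLipStep : ‖F (z (k+1)) - b‖
          ≤ ‖(1 - ((k : ℝ)+1)⁻¹) • F (z k) - b‖ := by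
        have h1 := hLip (z (k+1)) (w k)
        rw [hdw, norm_smul] at h1
        have h2 : L * (‖(1:ℝ)/L‖ * ‖(1 - ((k : ℝ)+1)⁻¹) • F (z k) - b‖)
            = ‖(1 - ((k : ℝ)+1)⁻¹) • F (z k) - b‖ := by
          rw [Real.norm_eq_abs, abs_of_pos (by positivity : (0:ℝ) < 1/L)]
          field_simp
        rw [h2] at h1
        exact h1
      have hComStep : ρ * ‖F (z (k+1)) - F (z k)‖ ^ 2
          ≤ ⟪F (z (k+1)) - F (z k), ((k : ℝ)+1)⁻¹ • (z0 - z k) - (1/L) • b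
              - ((1-((k : ℝ)+1)⁻¹)*(2*ρ)) • F (z k)⟫ := by
        have h := hComono (z (k+1)) (z k)
        rwa [← hdz]
      have hstep := feg_step_s7 L ρ (k : ℝ) hL hn0 (z0 - z k) (F (z k)) b
        (F (z (k+1))) hLipStep hComStep ih
      have hz0k1 : z0 - z (k+1)
          = (z0 - z k) - (((k : ℝ)+1)⁻¹ • (z0 - z k) - (1/L) • b
              - ((1-((k : ℝ)+1)⁻¹)*(2*ρ)) • F (z k)) := by
        rw [← hdz]; abel
      rw [← hz0k1] at hstep
      have hcast : ((k+1 : ℕ) : ℝ) = (k : ℝ) + 1 := by push_cast; ring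
      rw [hcast]
      exact hstep
  intro k hk
  linarith [main k]
end

section
/- Let F : ℝ^d → ℝ^d, z₀ ∈ ℝ^d, and let {τ_k}_{k≥0}, {η_k}_{k≥1} be nonincreasing sequences of positive reals. Let z₁ = z₀ − τ₀ F z₀ satisfy ‖F z₁ − F z₀‖ ≤ (1/τ₀)‖z₁ − z₀‖, and for each k ≥ 1 let z_{k+1/2} = z_k + (1/(k+1))(z₀ − z_k) − (k/(k+1)) η_k F z_k and z_{k+1} = z_k + (1/(k+1))(z₀ − z_k) − τ_k F z_{k+1/2} − (k/(k+1))(η_k − τ_k) F z_k, and assume ‖F z_{k+1} − F z_{k+1/2}‖ ≤ (1/τ_k)‖z_{k+1} − z_{k+1/2}‖ and ⟨F z_{k+1} − F z_k, z_{k+1} − z_k⟩ ≥ ((η_k − τ_k)/2)‖F z_{k+1} − F z_k‖². Then for all k ≥ 1, (k/2)((k−1)η_k + τ_k)‖F z_k‖² ≤ k⟨F z_k, z₀ − z_k⟩. -/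
open scoped RealInnerProductSpace

/-- One-step potential decrease for FEG-A, abstracted. -/
lemma feg_step_s8 {E : Type*} [NormedAddCommGroup E] [InnerProductSpace ℝ E]
    (k τ η : ℝ) (hk : 1 ≤ k) (hτ : 0 < τ)
    (g g' h u : E)
    (H1 : ‖g' - h‖ ≤ ‖(k / (k + 1)) • g - h‖)
    (H2 : ((η - τ) / 2) * ‖g' - g‖ ^ 2
      ≤ ⟪g' - g, ((k + 1)⁻¹) • u - τ • h - ((k / (k + 1)) * (η - τ)) • g⟫) :
    ((k + 1) / 2) * (k * η + τ) * ‖g'‖ ^ 2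
      - (k + 1) * ⟪g', (k / (k + 1)) • u + τ • h + ((k / (k + 1)) * (η - τ)) • g⟫
    ≤ (k / 2) * ((k - 1) * η + τ) * ‖g‖ ^ 2 - k * ⟪g, u⟫ := by
  have hk1 : (0:ℝ) < k + 1 := by linarith
  have hkne : (k:ℝ) + 1 ≠ 0 := ne_of_gt hk1
  -- scalar abbreviations
  set P := ‖g‖ ^ 2 with hP
  set Q := ‖g'‖ ^ 2 with hQ
  set R := ‖h‖ ^ 2 with hR
  set a := ⟪g', g⟫ with ha
  set b := ⟪g, h⟫ with hb
  set c := ⟪g', h⟫ with hc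
  set p := ⟪g, u⟫ with hp
  set q := ⟪g', u⟫ with hq
  have e1 : ‖g' - h‖ ^ 2 = Q - 2 * c + R := by
    rw [hQ, hc, hR]; exact norm_sub_sq_real g' h
  have e2 : ‖(k / (k + 1)) • g - h‖ ^ 2
      = (k / (k + 1)) ^ 2 * P - 2 * (k / (k + 1)) * b + R := by
    rw [norm_sub_sq_real, norm_smul, real_inner_smul_left, Real.norm_eq_abs,
      mul_pow, sq_abs, hP, hb, hR]
    ring
  have e3 : ‖g' - g‖ ^ 2 = Q - 2 * a + P := by
    rw [hQ, ha, hP]; exact norm_sub_sq_real g' g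
  have e4 : ⟪g' - g, ((k + 1)⁻¹) • u - τ • h - ((k / (k + 1)) * (η - τ)) • g⟫
      = (k + 1)⁻¹ * q - τ * c - (k / (k + 1)) * (η - τ) * a
        - (k + 1)⁻¹ * p + τ * b + (k / (k + 1)) * (η - τ) * P := by
    simp only [inner_sub_left, inner_sub_right, real_inner_smul_right,
      real_inner_self_eq_norm_sq, ← hP, ← ha, ← hb, ← hc, ← hp, ← hq]
    ring
  have e5 : ⟪g', (k / (k + 1)) • u + τ • h + ((k / (k + 1)) * (η - τ)) • g⟫
      = (k / (k + 1)) * q + τ * c + (k / (k + 1)) * (η - τ) * a := by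
    simp only [inner_add_right, real_inner_smul_right, ← ha, ← hc, ← hq]
  have H1sq : ‖g' - h‖ ^ 2 ≤ ‖(k / (k + 1)) • g - h‖ ^ 2 :=
    pow_le_pow_left₀ (norm_nonneg _) H1 2
  rw [e1, e2] at H1sq
  rw [e3, e4] at H2
  rw [e5]
  -- the two nonnegative residuals
  have hA : 0 ≤ (k / (k + 1)) ^ 2 * P - 2 * (k / (k + 1)) * b + R - (Q - 2 * c + R) := by
    linarith
  have hB : 0 ≤ ((k + 1)⁻¹ * q - τ * c - (k / (k + 1)) * (η - τ) * a
      - (k + 1)⁻¹ * p + τ * b + (k / (k + 1)) * (η - τ) * P)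
      - ((η - τ) / 2) * (Q - 2 * a + P) := by linarith
  have hc1 : (0:ℝ) ≤ (k + 1) ^ 2 * τ / 2 := by positivity
  have hc2 : (0:ℝ) ≤ k * (k + 1) := by positivity
  have t1 := mul_nonneg hc1 hA
  have t2 := mul_nonneg hc2 hB
  have key : (k / 2) * ((k - 1) * η + τ) * P - k * p
      - (((k + 1) / 2) * (k * η + τ) * Q
        - (k + 1) * ((k / (k + 1)) * q + τ * c + (k / (k + 1)) * (η - τ) * a))
      = (k + 1) ^ 2 * τ / 2
          * ((k / (k + 1)) ^ 2 * P - 2 * (k / (k + 1)) * b + R - (Q - 2 * c + R))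
        + k * (k + 1)
          * (((k + 1)⁻¹ * q - τ * c - (k / (k + 1)) * (η - τ) * a
              - (k + 1)⁻¹ * p + τ * b + (k / (k + 1)) * (η - τ) * P)
            - ((η - τ) / 2) * (Q - 2 * a + P)) := by
    field_simp
    ring
  linarith

/-- **Nonpositivity of the FEG-A potential** (from the proof of Theorem 2).
For the FEG-A iterates with nonincreasing positive step sizes `τ_k`, `η_k`
satisfying the backtracking conditions, one has
`(k/2)((k-1)η_k + τ_k) ‖F z_k‖² ≤ k ⟪F z_k, z₀ - z_k⟫` for all `k ≥ 1`. -/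
theorem feg_a_potential_nonpositive
    {d : ℕ}
    (F : EuclideanSpace ℝ (Fin d) → EuclideanSpace ℝ (Fin d))
    (z0 : EuclideanSpace ℝ (Fin d))
    (τ η : ℕ → ℝ)
    (hτpos : ∀ k, 0 < τ k) (hηpos : ∀ k, 1 ≤ k → 0 < η k)
    (hτmono : ∀ k, τ (k + 1) ≤ τ k) (hηmono : ∀ k, 1 ≤ k → η (k + 1) ≤ η k)
    (z w : ℕ → EuclideanSpace ℝ (Fin d))
    (hz0 : z 0 = z0)
    (hz1 : z 1 = z0 - τ 0 • F z0)
    (hz1lip : ‖F (z 1) - F (z 0)‖ ≤ (1 / τ 0) * ‖z 1 - z 0‖)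
    (hw : ∀ k : ℕ, 1 ≤ k → w k = z k + (((k : ℝ) + 1)⁻¹) • (z0 - z k)
      - (((k : ℝ) / ((k : ℝ) + 1)) * η k) • F (z k))
    (hz : ∀ k : ℕ, 1 ≤ k → z (k + 1) = z k + (((k : ℝ) + 1)⁻¹) • (z0 - z k)
      - τ k • F (w k) - (((k : ℝ) / ((k : ℝ) + 1)) * (η k - τ k)) • F (z k))
    (hbtLip : ∀ k : ℕ, 1 ≤ k →
      ‖F (z (k + 1)) - F (w k)‖ ≤ (1 / τ k) * ‖z (k + 1) - w k‖)
    (hbtComono : ∀ k : ℕ, 1 ≤ k →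
      ((η k - τ k) / 2) * ‖F (z (k + 1)) - F (z k)‖ ^ 2
        ≤ ⟪F (z (k + 1)) - F (z k), z (k + 1) - z k⟫) :
    ∀ k : ℕ, 1 ≤ k →
      ((k : ℝ) / 2) * (((k : ℝ) - 1) * η k + τ k) * ‖F (z k)‖ ^ 2
        ≤ (k : ℝ) * ⟪F (z k), z0 - z k⟫ := by
  intro k hk
  induction k, hk using Nat.le_induction with
  | base =>
    -- base case k = 1
    have hτ0 : 0 < τ 0 := hτpos 0
    have hzd : z 1 - z 0 = -(τ 0 • F z0) := by rw [hz1, hz0]; abel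
    have hn : ‖z 1 - z 0‖ = τ 0 * ‖F z0‖ := by
      rw [hzd, norm_neg, norm_smul, Real.norm_eq_abs, abs_of_pos hτ0]
    have hlip : ‖F (z 1) - F (z 0)‖ ≤ ‖F z0‖ := by
      calc ‖F (z 1) - F (z 0)‖ ≤ (1 / τ 0) * ‖z 1 - z 0‖ := hz1lip
        _ = ‖F z0‖ := by rw [hn]; field_simp
    have hlipsq : ‖F (z 1) - F (z 0)‖ ^ 2 ≤ ‖F z0‖ ^ 2 :=
      pow_le_pow_left₀ (norm_nonneg _) hlip 2
    rw [norm_sub_sq_real] at hlipsq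
    rw [hz0] at hlipsq
    have hin : ⟪F (z 1), z0 - z 1⟫ = τ 0 * ⟪F (z 1), F z0⟫ := by
      have : z0 - z 1 = τ 0 • F z0 := by rw [hz1]; abel
      rw [this, real_inner_smul_right]
    have hτ10 : τ 1 ≤ τ 0 := hτmono 0
    have hnn : (0:ℝ) ≤ ‖F (z 1)‖ ^ 2 := by positivity
    push_cast
    rw [hin]
    nlinarith [hτpos 1]
  | succ k hk ih =>
    -- inductive step
    have hτ : 0 < τ k := hτpos k
    have hkR : (1:ℝ) ≤ (k:ℝ) := by exact_mod_cast hk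
    have hk1 : (0:ℝ) < (k:ℝ) + 1 := by linarith
    have hkne2 : ((k:ℝ) + 1) ≠ 0 := ne_of_gt hk1
    -- vector identity: z (k+1) - w k = τ k • ((k/(k+1)) • F (z k) - F (w k))
    have hv1 : z (k + 1) - w k
        = τ k • (((k:ℝ) / ((k:ℝ) + 1)) • F (z k) - F (w k)) := by
      rw [hz k hk, hw k hk]
      match_scalars <;> ring
    -- vector identity: z (k+1) - z k = δ
    have hv2 : z (k + 1) - z k
        = (((k:ℝ) + 1)⁻¹) • (z0 - z k) - τ k • F (w k)
          - (((k:ℝ) / ((k:ℝ) + 1)) * (η k - τ k)) • F (z k) := by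
      rw [hz k hk]
      match_scalars <;> ring
    -- vector identity: z0 - z (k+1) = β u + τ h + β(η-τ) g
    have hv3 : z0 - z (k + 1)
        = (((k:ℝ) / ((k:ℝ) + 1))) • (z0 - z k) + τ k • F (w k)
          + (((k:ℝ) / ((k:ℝ) + 1)) * (η k - τ k)) • F (z k) := by
      rw [hz k hk]
      match_scalars <;> field_simp [hkne2] <;> ring
    -- H1
    have H1 : ‖F (z (k + 1)) - F (w k)‖
        ≤ ‖((k:ℝ) / ((k:ℝ) + 1)) • F (z k) - F (w k)‖ := by
      have hL := hbtLip k hk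
      rw [hv1, norm_smul, Real.norm_eq_abs, abs_of_pos hτ] at hL
      calc ‖F (z (k + 1)) - F (w k)‖
          ≤ 1 / τ k * (τ k * ‖((k:ℝ) / ((k:ℝ) + 1)) • F (z k) - F (w k)‖) := hL
        _ = ‖((k:ℝ) / ((k:ℝ) + 1)) • F (z k) - F (w k)‖ := by
            field_simp
    -- H2
    have H2 : ((η k - τ k) / 2) * ‖F (z (k + 1)) - F (z k)‖ ^ 2
        ≤ ⟪F (z (k + 1)) - F (z k), (((k:ℝ) + 1)⁻¹) • (z0 - z k) - τ k • F (w k)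
            - (((k:ℝ) / ((k:ℝ) + 1)) * (η k - τ k)) • F (z k)⟫ := by
      have := hbtComono k hk
      rwa [hv2] at this
    have step := feg_step_s8 (k:ℝ) (τ k) (η k) hkR hτ
      (F (z k)) (F (z (k + 1))) (F (w k)) (z0 - z k) H1 H2
    have hih : ((k:ℝ) / 2) * (((k:ℝ) - 1) * η k + τ k) * ‖F (z k)‖ ^ 2
        - (k:ℝ) * ⟪F (z k), z0 - z k⟫ ≤ 0 := by linarith [ih]
    have hmain : (((k:ℝ) + 1) / 2) * ((k:ℝ) * η k + τ k) * ‖F (z (k + 1))‖ ^ 2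
        - ((k:ℝ) + 1) * ⟪F (z (k + 1)), z0 - z (k + 1)⟫ ≤ 0 := by
      rw [hv3]; linarith
    -- pass to step sizes at k+1 using monotonicity
    have hcoef : (k:ℝ) * η (k + 1) + τ (k + 1) ≤ (k:ℝ) * η k + τ k := by
      have h1 := hηmono k hk
      have h2 := hτmono k
      have h3 : (0:ℝ) ≤ (k:ℝ) := by linarith
      nlinarith [mul_le_mul_of_nonneg_left h1 h3]
    have hnn : (0:ℝ) ≤ ‖F (z (k + 1))‖ ^ 2 := by positivity
    have hfinal : (((k:ℝ) + 1) / 2) * ((k:ℝ) * η (k + 1) + τ (k + 1)) * ‖F (z (k + 1))‖ ^ 2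
        - ((k:ℝ) + 1) * ⟪F (z (k + 1)), z0 - z (k + 1)⟫ ≤ 0 := by
      have hmul : (((k:ℝ) + 1) / 2) * ((k:ℝ) * η (k + 1) + τ (k + 1)) * ‖F (z (k + 1))‖ ^ 2
          ≤ (((k:ℝ) + 1) / 2) * ((k:ℝ) * η k + τ k) * ‖F (z (k + 1))‖ ^ 2 := by
        apply mul_le_mul_of_nonneg_right _ hnn
        apply mul_le_mul_of_nonneg_left hcoef (by positivity)
      linarith
    push_cast
    rw [show ((k:ℝ) + 1 - 1) = (k:ℝ) from by ring]
    linarith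
end

section
/- Let L, R > 0 and define f : ℝ² → ℝ by f(x,y) = R/2 if x < y − √(R/L); f(x,y) = −(L/2)(x−y)² − √(LR)(x−y) if y − √(R/L) ≤ x < y; f(x,y) = (L/2)(x−y)² − √(LR)(x−y) if y ≤ x < y + √(R/L); and f(x,y) = −R/2 if x ≥ y + √(R/L). Then f is differentiable on ℝ², its saddle gradient F := (∂f/∂x, −∂f/∂y) satisfies F(x,y) = (−√(LR), −√(LR)) whenever x = y, and consequently every sequence {z_k}_{k≥0} ⊂ ℝ² with z₀ = (0,0) and z_k ∈ z₀ + span{F z₀, F z₁, …, F z_k} for all k ≥ 0 satisfies ‖F z_k‖² = 2LR for all k ≥ 0. -/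
/-!
The function depends only on `t = x - y`, through a `C¹` profile `g` (quadratic pieces glued to
constants at `t = ±√(R/L)` with matching values and slopes). Hence `F(x, y) = g'(x - y) • (1, 1)`
always points along the diagonal, so a span-respecting method started at the origin never leaves
the diagonal `x = y`, where `F = g'(0) • (1, 1) = -√(LR) • (1, 1)`.
-/

theorem hasDerivAt_ite_lt {g₁ g₂ g₁' g₂' : ℝ → ℝ} {a : ℝ}
    (h₁ : ∀ t, HasDerivAt g₁ (g₁' t) t) (h₂ : ∀ t, HasDerivAt g₂ (g₂' t) t)
    (hval : g₁ a = g₂ a) (hder : g₁' a = g₂' a) (t : ℝ) :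
    HasDerivAt (fun t => if t < a then g₁ t else g₂ t) (if t < a then g₁' t else g₂' t) t := by
  rcases lt_trichotomy t a with ht | rfl | ht
  · rw [if_pos ht]
    refine (h₁ t).congr_of_eventuallyEq ?_
    filter_upwards [Iio_mem_nhds ht] with u hu using if_pos hu
  · rw [if_neg (lt_irrefl t)]
    have hleft :
        HasDerivWithinAt (fun u => if u < t then g₁ u else g₂ u) (g₂' t) (Set.Iic t) t := by
      refine (hder ▸ h₁ t).hasDerivWithinAt.congr (fun u hu => ?_) (by simp [hval])
      split_ifs with h
      · rfl
      · rw [le_antisymm hu (not_lt.1 h), hval]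
    have hright : HasDerivWithinAt (fun u => if u < t then g₁ u else g₂ u) (g₂' t) (Set.Ici t) t :=
      (h₂ t).hasDerivWithinAt.congr (fun u hu => if_neg (not_lt.2 hu)) (if_neg (lt_irrefl t))
    simpa only [Set.Iic_union_Ici, hasDerivWithinAt_univ] using hleft.union hright
  · rw [if_neg ht.not_gt]
    refine (h₂ t).congr_of_eventuallyEq ?_
    filter_upwards [Ioi_mem_nhds ht] with u hu using if_neg (not_lt.2 hu.le)

theorem hasDerivAt_quadratic (a b t : ℝ) :
    HasDerivAt (fun t => a * t ^ 2 - b * t) (2 * a * t - b) t :=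
  (((hasDerivAt_pow 2 t).const_mul a).sub ((hasDerivAt_id' t).const_mul b)).congr_deriv (by
    push_cast; ring)

noncomputable section

/-- With `s = √(R/L)` one has `L * s = √(LR)` and `L * s ^ 2 = R`, which turns this into the
paper's `f(x, y)` at `t = x - y`. -/
def worstProfile (L s t : ℝ) : ℝ :=
  if t < -s then L * s ^ 2 / 2
  else if t < 0 then -(L / 2) * t ^ 2 - L * s * t
  else if t < s then L / 2 * t ^ 2 - L * s * t
  else -(L * s ^ 2) / 2

def worstProfileDeriv (L s t : ℝ) : ℝ :=
  if t < -s then 0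
  else if t < 0 then -(L * t) - L * s
  else if t < s then L * t - L * s
  else 0

end

theorem hasDerivAt_worstProfile (L : ℝ) {s : ℝ} (hs : 0 < s) (t : ℝ) :
    HasDerivAt (worstProfile L s) (worstProfileDeriv L s t) t := by
  have hconst (c t : ℝ) : HasDerivAt (fun _ => c) 0 t := hasDerivAt_const t c
  refine (hasDerivAt_ite_lt (a := -s) (hconst _)
    (hasDerivAt_ite_lt (a := 0) (hasDerivAt_quadratic (-(L / 2)) (L * s))
      (hasDerivAt_ite_lt (a := s) (hasDerivAt_quadratic (L / 2) (L * s)) (hconst _) ?_ ?_)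
      ?_ ?_) ?_ ?_ t).congr_deriv ?_
  · ring
  · ring
  · rw [if_pos hs]; ring
  · rw [if_pos hs]; ring
  · rw [if_pos (neg_neg_of_pos hs)]; ring
  · rw [if_pos (neg_neg_of_pos hs)]; ring
  · simp only [worstProfileDeriv]
    split_ifs <;> ring

theorem worstProfileDeriv_zero (L : ℝ) {s : ℝ} (hs : 0 < s) :
    worstProfileDeriv L s 0 = -(L * s) := by
  simp [worstProfileDeriv, hs, hs.le.not_gt]

theorem worstProfile_sub (L s x y : ℝ) :
    worstProfile L s (x - y) =
      if x < y - s then L * s ^ 2 / 2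
      else if x < y then -(L / 2) * (x - y) ^ 2 - L * s * (x - y)
      else if x < y + s then L / 2 * (x - y) ^ 2 - L * s * (x - y)
      else -(L * s ^ 2) / 2 := by
  simp only [worstProfile, sub_lt_iff_lt_add', ← sub_eq_add_neg, add_zero]

noncomputable def diagGap : EuclideanSpace ℝ (Fin 2) →L[ℝ] ℝ :=
  EuclideanSpace.proj 0 - EuclideanSpace.proj 1

@[simp]
theorem diagGap_apply (p : EuclideanSpace ℝ (Fin 2)) : diagGap p = p 0 - p 1 := rfl

theorem hasFDerivAt_comp_diagGap {g g' : ℝ → ℝ} (hg : ∀ t, HasDerivAt g (g' t) t)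
    (p : EuclideanSpace ℝ (Fin 2)) :
    HasFDerivAt (g ∘ diagGap) (g' (diagGap p) • diagGap) p :=
  (hg _).comp_hasFDerivAt p diagGap.hasFDerivAt

theorem fderiv_comp_diagGap_single {g g' : ℝ → ℝ} (hg : ∀ t, HasDerivAt g (g' t) t)
    (p : EuclideanSpace ℝ (Fin 2)) :
    fderiv ℝ (g ∘ diagGap) p (EuclideanSpace.single 0 1) = g' (p 0 - p 1) ∧
      fderiv ℝ (g ∘ diagGap) p (EuclideanSpace.single 1 1) = -g' (p 0 - p 1) := by
  simp [(hasFDerivAt_comp_diagGap hg p).fderiv]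

/-- **A smooth worst-case example for first-order methods** (Lemma 3 of the paper).
The piecewise function `f` below is differentiable, its saddle gradient
`F = (∂f/∂x, -∂f/∂y)` equals `(-√(LR), -√(LR))` on the diagonal `x = y`, and
hence every span-respecting first-order method started at `(0,0)` has
`‖F z_k‖² = 2LR` for all `k`. -/
theorem smooth_worst_case_example
    (L R : ℝ) (hL : 0 < L) (hR : 0 < R)
    (f : EuclideanSpace ℝ (Fin 2) → ℝ)
    (hf : ∀ p : EuclideanSpace ℝ (Fin 2),
      f p = if p 0 < p 1 - Real.sqrt (R / L) then R / 2
        else if p 0 < p 1 then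
          -(L / 2) * (p 0 - p 1) ^ 2 - Real.sqrt (L * R) * (p 0 - p 1)
        else if p 0 < p 1 + Real.sqrt (R / L) then
          (L / 2) * (p 0 - p 1) ^ 2 - Real.sqrt (L * R) * (p 0 - p 1)
        else -R / 2)
    (F : EuclideanSpace ℝ (Fin 2) → EuclideanSpace ℝ (Fin 2))
    (hF0 : ∀ p : EuclideanSpace ℝ (Fin 2),
      F p 0 = fderiv ℝ f p (EuclideanSpace.single 0 1))
    (hF1 : ∀ p : EuclideanSpace ℝ (Fin 2),
      F p 1 = -(fderiv ℝ f p (EuclideanSpace.single 1 1))) :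
    Differentiable ℝ f ∧
    (∀ p : EuclideanSpace ℝ (Fin 2), p 0 = p 1 →
      F p 0 = -Real.sqrt (L * R) ∧ F p 1 = -Real.sqrt (L * R)) ∧
    (∀ z : ℕ → EuclideanSpace ℝ (Fin 2),
      z 0 = 0 →
      (∀ k : ℕ, z k - z 0 ∈
        Submodule.span ℝ {v : EuclideanSpace ℝ (Fin 2) | ∃ i ≤ k, v = F (z i)}) →
      ∀ k : ℕ, ‖F (z k)‖ ^ 2 = 2 * L * R) := by
  set s := Real.sqrt (R / L)
  have hs : 0 < s := Real.sqrt_pos.2 (div_pos hR hL)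
  have hLs2 : L * s ^ 2 = R := by
    rw [Real.sq_sqrt (div_pos hR hL).le]; field_simp
  have hLs : L * s = Real.sqrt (L * R) := by
    rw [← hLs2, show L * (L * s ^ 2) = (L * s) ^ 2 by ring, Real.sqrt_sq (mul_pos hL hs).le]
  have hfg : f = worstProfile L s ∘ diagGap := by
    funext p
    rw [hf p, Function.comp_apply, diagGap_apply, worstProfile_sub, hLs2, hLs]
  have hg := hasDerivAt_worstProfile L hs
  have hF (p : EuclideanSpace ℝ (Fin 2)) :
      F p 0 = worstProfileDeriv L s (p 0 - p 1) ∧ F p 1 = worstProfileDeriv L s (p 0 - p 1) := by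
    obtain ⟨h0, h1⟩ := fderiv_comp_diagGap_single hg p
    rw [hF0, hF1, hfg, h0, h1, neg_neg]
    exact ⟨rfl, rfl⟩
  have hdiag (p : EuclideanSpace ℝ (Fin 2)) (hp : p 0 = p 1) :
      F p 0 = -Real.sqrt (L * R) ∧ F p 1 = -Real.sqrt (L * R) := by
    rw [(hF p).1, (hF p).2, hp, sub_self, worstProfileDeriv_zero L hs, hLs]
    exact ⟨rfl, rfl⟩
  refine ⟨hfg ▸ fun p => (hasFDerivAt_comp_diagGap hg p).differentiableAt, hdiag, ?_⟩
  intro z hz0 hspan k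
  have hker : z k ∈ LinearMap.ker (diagGap : EuclideanSpace ℝ (Fin 2) →ₗ[ℝ] ℝ) := by
    rw [← sub_zero (z k), ← hz0]
    refine Submodule.span_le.2 ?_ (hspan k)
    rintro _ ⟨i, -, rfl⟩
    simp [(hF (z i)).1, (hF (z i)).2]
  obtain ⟨h0, h1⟩ := hdiag (z k) (by simpa [sub_eq_zero] using hker)
  rw [EuclideanSpace.norm_sq_eq, Fin.sum_univ_two, h0, h1]
  simp only [Real.norm_eq_abs, sq_abs, neg_sq, Real.sq_sqrt (mul_pos hL hR).le]
  ring
end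

section
/- Let γ > 0, η > γ, and let F : ℝ^d → ℝ^d be γ-Lipschitz. Suppose R : ℝ^d → ℝ^d is a bijection satisfying R(z) + (1/η) F(R(z)) = z for all z ∈ ℝ^d (i.e., R is the resolvent (I + (1/η)F)^{-1}). Then the operator z ↦ F(R(z)) is monotone (i.e., ⟨F(R(z)) − F(R(w)), z − w⟩ ≥ 0 for all z, w ∈ ℝ^d) if and only if F is (−1/η)-comonotone (i.e., ⟨F z' − F w', z' − w'⟩ ≥ −(1/η)‖F z' − F w'‖² for all z', w' ∈ ℝ^d). -/
open scoped RealInnerProductSpace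

/-- **Saddle-envelope monotonicity vs. negative comonotonicity**
(from the proof of Example 1 of the paper).
For a `γ`-Lipschitz operator `F` and `η > γ`, with `R` the resolvent
`(I + (1/η)F)⁻¹` (a bijection), the operator `z ↦ F(R z)` is monotone
if and only if `F` is `(-1/η)`-comonotone. -/
theorem envelope_monotone_iff_neg_comonotone
    {d : ℕ}
    (γ η : ℝ) (hγ : 0 < γ) (hη : γ < η)
    (F : EuclideanSpace ℝ (Fin d) → EuclideanSpace ℝ (Fin d))
    (hLip : ∀ z z' : EuclideanSpace ℝ (Fin d), ‖F z - F z'‖ ≤ γ * ‖z - z'‖)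
    (R : EuclideanSpace ℝ (Fin d) → EuclideanSpace ℝ (Fin d))
    (hRbij : Function.Bijective R)
    (hR : ∀ z : EuclideanSpace ℝ (Fin d), R z + (1 / η) • F (R z) = z) :
    (∀ z w : EuclideanSpace ℝ (Fin d), 0 ≤ ⟪F (R z) - F (R w), z - w⟫) ↔
    (∀ z' w' : EuclideanSpace ℝ (Fin d),
      -(1 / η) * ‖F z' - F w'‖ ^ 2 ≤ ⟪F z' - F w', z' - w'⟫) := by
  have key : ∀ z w : EuclideanSpace ℝ (Fin d),
      ⟪F (R z) - F (R w), z - w⟫ =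
      ⟪F (R z) - F (R w), R z - R w⟫ + (1 / η) * ‖F (R z) - F (R w)‖ ^ 2 := by
    intro z w
    have hzw : z - w = (R z - R w) + (1 / η) • (F (R z) - F (R w)) := by
      conv_lhs => rw [← hR z, ← hR w]
      simp [smul_sub]; abel
    rw [hzw, inner_add_right, real_inner_smul_right, real_inner_self_eq_norm_sq]
  constructor
  · intro h z' w'
    obtain ⟨z, hz⟩ := hRbij.2 z'
    obtain ⟨w, hw⟩ := hRbij.2 w'
    have := h z w
    rw [key z w] at this
    rw [← hz, ← hw]
    linarith
  · intro h z w
    have := h (R z) (R w)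
    rw [key z w]
    linarith
end

section
/- Let F : ℝ^d → ℝ^d be L-Lipschitz and monotone, let z₀ ∈ ℝ^d be deterministic, and let (ξ_{k/2})_{k≥0} (indexed by half-integers 0, 1/2, 1, 3/2, …) be mutually independent ℝ^d-valued random variables with E[ξ_{k/2}] = 0 and E[‖ξ_{k/2}‖²] = σ_{k/2}² < ∞. Let {α_k}_{k≥0} ⊂ (0,∞) and {β_k}_{k≥0} with β₀ = 1, β_k ∈ (0,1) for k ≥ 1, define the stochastic iterates z_{k+1/2} = z_k + β_k(z₀ − z_k) − (1−β_k)α_k (F z_k + ξ_k) and z_{k+1} = z_k + β_k(z₀ − z_k) − α_k (F z_{k+1/2} + ξ_{k+1/2}), so in particular z₁ = z₀ − α₀(F z₀ + ξ₀). Then: (i) |E[⟨F z₁, ξ₀⟩]| ≤ L α₀ σ₀²; (ii) for all k ≥ 0, |E[⟨F z_{k+1/2}, ξ_k⟩]| ≤ L(1−β_k)α_k σ_k²; and (iii) for all k ≥ 0, |E[⟨F z_{k+1}, ξ_{k+1/2}⟩]| ≤ L α_k σ_{k+1/2}². -/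
/-!
Each point at which `F` is correlated with a noise `ξ` has the form `X = Y - c • ξ`, where `Y` is
a function of the noise queried before `ξ` and hence independent of it. Independence and
`E ξ = 0` give `E⟪F Y, ξ⟫ = 0`, so `E⟪F X, ξ⟫ = E⟪F X - F Y, ξ⟫`, which the Lipschitz bound
controls pathwise by `L ‖X - Y‖ ‖ξ‖ = L c ‖ξ‖²`. The step is `c = α₀` for `z₁` against `ξ₀`,
`c = (1 - β_k) α_k` for `z_{k+1/2}` against `ξ_k`, `c = α_k` for `z_{k+1}` against `ξ_{k+1/2}`,
and `c = 0` for `z₁` against `ξ_{1/2}`.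
-/

open MeasureTheory ProbabilityTheory
open scoped NNReal RealInnerProductSpace

section Lipschitz

variable {Ω E : Type*} [MeasurableSpace Ω] {μ : Measure Ω} [NormedAddCommGroup E]

theorem LipschitzWith.integrable_comp [IsFiniteMeasure μ] {K : ℝ≥0} {F : E → E}
    (hF : LipschitzWith K F) {Y : Ω → E} (hY : Integrable Y μ) :
    Integrable (fun ω => F (Y ω)) μ := by
  refine .mono' ((integrable_const ‖F 0‖).add (hY.norm.const_mul K))
    (hF.continuous.comp_aestronglyMeasurable hY.1) (ae_of_all _ fun ω => ?_)
  calc ‖F (Y ω)‖ ≤ ‖F 0‖ + ‖F (Y ω) - F 0‖ := norm_le_norm_add_norm_sub' _ _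
    _ ≤ ‖F 0‖ + K * ‖Y ω‖ := by simpa using hF.norm_sub_le (Y ω) 0

end Lipschitz

section Correlation

variable {Ω E : Type*} [MeasurableSpace Ω] {μ : Measure Ω}
  [NormedAddCommGroup E] [InnerProductSpace ℝ E] [MeasurableSpace E] [BorelSpace E]

namespace ProbabilityTheory.IndepFun

variable {G ξ : Ω → E}

theorem integrable_inner (h : G ⟂ᵢ[μ] ξ) (hG : Integrable G μ) (hξ : Integrable ξ μ) :
    Integrable (fun ω => ⟪G ω, ξ ω⟫) μ :=
  h.integrable_bilin (G := ℝ) hG hξ (innerSL ℝ)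

theorem integral_inner_eq_zero [CompleteSpace E] (h : G ⟂ᵢ[μ] ξ) (hG : Integrable G μ)
    (hξ : Integrable ξ μ) (hξ0 : μ[ξ] = 0) : ∫ ω, ⟪G ω, ξ ω⟫ ∂μ = 0 := by
  have : ∫ ω, ⟪G ω, ξ ω⟫ ∂μ = ⟪μ[G], μ[ξ]⟫ := h.integral_bilin hG hξ (innerSL ℝ)
  rw [this, hξ0, inner_zero_right]

end ProbabilityTheory.IndepFun

variable [CompleteSpace E] [IsFiniteMeasure μ]

theorem abs_integral_inner_comp_sub_smul_le {K : ℝ≥0} {F : E → E} (hF : LipschitzWith K F)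
    {ξ Y X : Ω → E} (hξ : MemLp ξ 2 μ) (hξ0 : μ[ξ] = 0) {c : ℝ} (hc : 0 ≤ c)
    (hX : ∀ ω, X ω = Y ω - c • ξ ω) (hY : Integrable Y μ) (hYξ : Y ⟂ᵢ[μ] ξ) :
    |∫ ω, ⟪F (X ω), ξ ω⟫ ∂μ| ≤ K * c * ∫ ω, ‖ξ ω‖ ^ 2 ∂μ := by
  simp_rw [hX]
  have hξi : Integrable ξ μ := hξ.integrable one_le_two
  have hFY : Integrable (fun ω => F (Y ω)) μ := hF.integrable_comp hY
  have hFYξ : (fun ω => F (Y ω)) ⟂ᵢ[μ] ξ := hYξ.comp hF.continuous.measurable measurable_id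
  have hincr (ω : Ω) : ‖⟪F (Y ω - c • ξ ω) - F (Y ω), ξ ω⟫‖ ≤ K * c * ‖ξ ω‖ ^ 2 := calc
    _ ≤ ‖F (Y ω - c • ξ ω) - F (Y ω)‖ * ‖ξ ω‖ := norm_inner_le_norm _ _
    _ ≤ K * ‖(Y ω - c • ξ ω) - Y ω‖ * ‖ξ ω‖ := by gcongr; exact hF.norm_sub_le _ _
    _ = K * c * ‖ξ ω‖ ^ 2 := by
      rw [sub_sub_cancel_left, norm_neg, norm_smul, Real.norm_of_nonneg hc]; ring
  have hincr_int : Integrable (fun ω => ⟪F (Y ω - c • ξ ω) - F (Y ω), ξ ω⟫) μ :=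
    .mono' (hξ.integrable_norm_pow two_ne_zero |>.const_mul _)
      (((hF.continuous.comp_aestronglyMeasurable (hY.1.sub (hξ.1.const_smul c))).sub
        (hF.continuous.comp_aestronglyMeasurable hY.1)).inner hξ.1) (ae_of_all _ hincr)
  have hsplit : ∫ ω, ⟪F (Y ω - c • ξ ω), ξ ω⟫ ∂μ
      = ∫ ω, ⟪F (Y ω - c • ξ ω) - F (Y ω), ξ ω⟫ ∂μ + ∫ ω, ⟪F (Y ω), ξ ω⟫ ∂μ := by
    rw [← integral_add hincr_int (hFYξ.integrable_inner hFY hξi)]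
    simp_rw [inner_sub_left, sub_add_cancel]
  calc |∫ ω, ⟪F (Y ω - c • ξ ω), ξ ω⟫ ∂μ|
      = ‖∫ ω, ⟪F (Y ω - c • ξ ω) - F (Y ω), ξ ω⟫ ∂μ‖ := by
        rw [hsplit, hFYξ.integral_inner_eq_zero hFY hξi hξ0, add_zero, Real.norm_eq_abs]
    _ ≤ ∫ ω, K * c * ‖ξ ω‖ ^ 2 ∂μ :=
        norm_integral_le_of_norm_le (hξ.integrable_norm_pow two_ne_zero |>.const_mul _)
          (ae_of_all _ hincr)
    _ = K * c * ∫ ω, ‖ξ ω‖ ^ 2 ∂μ := integral_const_mul _ _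

end Correlation

section NoiseHistory

variable {Ω E : Type*} [MeasurableSpace E] {ξ : ℕ → Ω → E}

abbrev noiseHistory (ξ : ℕ → Ω → E) (n : ℕ) : MeasurableSpace Ω :=
  ⨆ i ∈ Set.Iio n, MeasurableSpace.comap (ξ i) ‹_›

theorem noiseHistory_mono : Monotone (noiseHistory ξ) :=
  fun _ _ hmn => biSup_mono fun _ hi => lt_of_lt_of_le hi hmn

theorem measurable_noiseHistory {i n : ℕ} (hi : i < n) : Measurable[noiseHistory ξ n] (ξ i) :=
  Measurable.of_comap_le (le_biSup (fun j => MeasurableSpace.comap (ξ j) ‹_›) (Set.mem_Iio.2 hi))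

theorem ProbabilityTheory.iIndepFun.indepFun_of_measurable_noiseHistory
    [MeasurableSpace Ω] {μ : Measure Ω} (hmeas : ∀ i, Measurable (ξ i)) (hξ : iIndepFun ξ μ)
    {γ : Type*} [MeasurableSpace γ] {Y : Ω → γ} {n : ℕ} (hY : Measurable[noiseHistory ξ n] Y) :
    Y ⟂ᵢ[μ] ξ n := by
  have h := indep_iSup_of_disjoint (fun i => (hmeas i).comap_le) hξ.iIndep
    (S := Set.Iio n) (T := {n}) (by simp)
  rw [iSup_singleton] at h
  exact (IndepFun_iff_Indep _ _ _).2 (indep_of_indep_of_le_left h hY.comap_le)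

end NoiseHistory

section SFEG

variable {Ω E : Type*} [NormedAddCommGroup E] [NormedSpace ℝ E]

def anchoredStep (z₀ : E) (β c : ℝ) (F : E → E) (a b : E) : E :=
  a + β • (z₀ - a) - c • F b

variable {z₀ : E} {F : E → E}

theorem Measurable.anchoredStep [MeasurableSpace E] [BorelSpace E] [SecondCountableTopology E]
    {m : MeasurableSpace Ω} {β c : ℝ} {a b : Ω → E} (hF : Measurable F) (ha : Measurable[m] a)
    (hb : Measurable[m] b) : Measurable[m] fun ω => anchoredStep z₀ β c F (a ω) (b ω) :=
  (ha.add ((measurable_const.sub ha).const_smul β)).sub ((hF.comp hb).const_smul c)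

theorem MeasureTheory.Integrable.anchoredStep [MeasurableSpace Ω] {μ : Measure Ω}
    [IsFiniteMeasure μ] {K : ℝ≥0} {β c : ℝ} {a b : Ω → E} (hF : LipschitzWith K F)
    (ha : Integrable a μ) (hb : Integrable b μ) :
    Integrable (fun ω => anchoredStep z₀ β c F (a ω) (b ω)) μ :=
  (ha.add (((integrable_const z₀).sub ha).smul β)).sub ((hF.integrable_comp hb).smul c)

/-- The Class S-FEG recursion, with `w k` standing for `z_{k+1/2}`. -/
structure IsSFEG (F : E → E) (z₀ : E) (ξ : ℕ → Ω → E) (α β : ℕ → ℝ) (z w : ℕ → Ω → E) :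
    Prop where
  z_zero : ∀ ω, z 0 ω = z₀
  z_one : ∀ ω, z 1 ω = z₀ - α 0 • (F z₀ + ξ 0 ω)
  w_eq : ∀ k ω, w k ω = anchoredStep z₀ (β k) ((1 - β k) * α k) F (z k ω) (z k ω)
    - ((1 - β k) * α k) • ξ (2 * k) ω
  z_succ : ∀ k, 1 ≤ k → ∀ ω, z (k + 1) ω = anchoredStep z₀ (β k) (α k) F (z k ω) (w k ω)
    - α k • ξ (2 * k + 1) ω

namespace IsSFEG

variable [MeasurableSpace E] [BorelSpace E] [SecondCountableTopology E]
  [MeasurableSpace Ω] {μ : Measure Ω} [IsFiniteMeasure μ] {K : ℝ≥0}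
  {ξ : ℕ → Ω → E} {α β : ℕ → ℝ} {z w : ℕ → Ω → E}

theorem z_one_adapted (hS : IsSFEG F z₀ ξ α β z w) (hξ : Integrable (ξ 0) μ) :
    Measurable[noiseHistory ξ 1] (z 1) ∧ Integrable (z 1) μ := by
  rw [funext hS.z_one]
  exact ⟨measurable_const.sub
      ((measurable_const.add (measurable_noiseHistory one_pos)).const_smul _),
    (integrable_const z₀).sub (((integrable_const _).add hξ).smul _)⟩

theorem w_adapted (hS : IsSFEG F z₀ ξ α β z w) (hF : LipschitzWith K F) {k : ℕ}
    (hξ : Integrable (ξ (2 * k)) μ)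
    (hz : Measurable[noiseHistory ξ (2 * k)] (z k) ∧ Integrable (z k) μ) :
    Measurable[noiseHistory ξ (2 * k + 1)] (w k) ∧ Integrable (w k) μ := by
  rw [funext (hS.w_eq k)]
  exact ⟨(Measurable.anchoredStep hF.continuous.measurable hz.1 hz.1 |>.mono
      (noiseHistory_mono (2 * k).le_succ) le_rfl).sub
      ((measurable_noiseHistory (2 * k).lt_succ_self).const_smul _),
    (hz.2.anchoredStep hF hz.2).sub (hξ.smul _)⟩

theorem z_adapted (hS : IsSFEG F z₀ ξ α β z w) (hF : LipschitzWith K F)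
    (hξ : ∀ n, Integrable (ξ n) μ) :
    ∀ k, Measurable[noiseHistory ξ (2 * k)] (z k) ∧ Integrable (z k) μ
  | 0 => by
    rw [funext hS.z_zero]
    exact ⟨measurable_const, integrable_const z₀⟩
  | 1 => (hS.z_one_adapted (hξ 0)).imp_left (·.mono (noiseHistory_mono (by norm_num)) le_rfl)
  | k + 2 => by
    have hz := hS.z_adapted hF hξ (k + 1)
    have hw := hS.w_adapted hF (hξ _) hz
    have hmono {i j : ℕ} (h : i ≤ j) := noiseHistory_mono (ξ := ξ) h
    rw [funext (hS.z_succ (k + 1) k.succ_pos)]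
    exact ⟨(Measurable.anchoredStep hF.continuous.measurable
        (hz.1.mono (hmono (by omega)) le_rfl) (hw.1.mono (hmono (by omega)) le_rfl)).sub
        ((measurable_noiseHistory (by omega)).const_smul _),
      (hz.2.anchoredStep hF hw.2).sub ((hξ _).smul _)⟩

end IsSFEG

end SFEG

theorem sfeg_bounded_noise_correlations_general
    {d : ℕ} {Ω : Type*} [MeasurableSpace Ω] (μ : Measure Ω) [IsProbabilityMeasure μ]
    (L : ℝ) (hL : 0 < L)
    (F : EuclideanSpace ℝ (Fin d) → EuclideanSpace ℝ (Fin d))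
    (hLip : ∀ z z' : EuclideanSpace ℝ (Fin d), ‖F z - F z'‖ ≤ L * ‖z - z'‖)
    (z0 : EuclideanSpace ℝ (Fin d))
    (ξ : ℕ → Ω → EuclideanSpace ℝ (Fin d))
    (hmeas : ∀ n, Measurable (ξ n))
    (hindep : iIndepFun ξ μ)
    (hmean : ∀ n, ∫ ω, ξ n ω ∂μ = 0)
    (σsq : ℕ → ℝ)
    (hint : ∀ n, Integrable (fun ω => ‖ξ n ω‖ ^ 2) μ)
    (hvar : ∀ n, ∫ ω, ‖ξ n ω‖ ^ 2 ∂μ = σsq n)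
    (α β : ℕ → ℝ)
    (hα : ∀ k, 0 < α k)
    (hβ0 : β 0 = 1)
    (hβ : ∀ k : ℕ, 1 ≤ k → β k ∈ Set.Ioo (0 : ℝ) 1)
    (z w : ℕ → Ω → EuclideanSpace ℝ (Fin d))
    (hz0 : ∀ ω, z 0 ω = z0)
    (hw : ∀ (k : ℕ) (ω : Ω), w k ω = z k ω + β k • (z0 - z k ω)
      - ((1 - β k) * α k) • (F (z k ω) + ξ (2 * k) ω))
    (hz1 : ∀ ω : Ω, z 1 ω = z0 - α 0 • (F z0 + ξ 0 ω))
    (hz : ∀ (k : ℕ), 1 ≤ k → ∀ ω : Ω, z (k + 1) ω = z k ω + β k • (z0 - z k ω)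
      - α k • (F (w k ω) + ξ (2 * k + 1) ω)) :
    |∫ ω, ⟪F (z 1 ω), ξ 0 ω⟫ ∂μ| ≤ L * α 0 * σsq 0 ∧
    (∀ k : ℕ, |∫ ω, ⟪F (w k ω), ξ (2 * k) ω⟫ ∂μ|
      ≤ L * (1 - β k) * α k * σsq (2 * k)) ∧
    (∀ k : ℕ, |∫ ω, ⟪F (z (k + 1) ω), ξ (2 * k + 1) ω⟫ ∂μ|
      ≤ L * α k * σsq (2 * k + 1)) := by
  have hF : LipschitzWith ⟨L, hL.le⟩ F := lipschitzWith_iff_norm_sub_le.2 hLip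
  have hξ (n : ℕ) : MemLp (ξ n) 2 μ :=
    (memLp_two_iff_integrable_sq_norm (hmeas n).aestronglyMeasurable).2 (hint n)
  have hξi (n : ℕ) : Integrable (ξ n) μ := (hξ n).integrable one_le_two
  have hS : IsSFEG F z0 ξ α β z w :=
    { z_zero := hz0, z_one := hz1
      w_eq := fun k ω => by rw [hw, anchoredStep]; module
      z_succ := fun k hk ω => by rw [hz k hk, anchoredStep]; module }
  have hz_adapted := hS.z_adapted hF hξi
  have key (n : ℕ) {c : ℝ} (hc : 0 ≤ c) {X Y : Ω → EuclideanSpace ℝ (Fin d)}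
      (hX : ∀ ω, X ω = Y ω - c • ξ n ω) (hY : Measurable[noiseHistory ξ n] Y ∧ Integrable Y μ) :
      |∫ ω, ⟪F (X ω), ξ n ω⟫ ∂μ| ≤ L * c * σsq n :=
    hvar n ▸ abs_integral_inner_comp_sub_smul_le hF (hξ n) (hmean n) hc hX hY.2
      (hindep.indepFun_of_measurable_noiseHistory hmeas hY.1)
  have hFm : Measurable F := hF.continuous.measurable
  refine ⟨?_, fun k => ?_, fun k => ?_⟩
  · exact key 0 (hα 0).le (Y := fun _ => z0 - α 0 • F z0) (fun ω => by rw [hz1]; module)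
      ⟨measurable_const, integrable_const _⟩
  · have hβk : β k ≤ 1 := by
      rcases k.eq_zero_or_pos with rfl | hk
      exacts [hβ0.le, (hβ k hk).2.le]
    have hzk := hz_adapted k
    have hc : 0 ≤ (1 - β k) * α k := mul_nonneg (sub_nonneg.2 hβk) (hα k).le
    simpa only [mul_assoc] using key (2 * k) hc (hS.w_eq k)
      ⟨.anchoredStep hFm hzk.1 hzk.1, hzk.2.anchoredStep hF hzk.2⟩
  · rcases k.eq_zero_or_pos with rfl | hk
    · have hσ : 0 ≤ σsq 1 := hvar 1 ▸ integral_nonneg fun ω => by positivity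
      calc _ ≤ L * 0 * σsq 1 := key 1 le_rfl (fun ω => by simp) (hS.z_one_adapted (hξi 0))
        _ ≤ _ := by rw [mul_zero, zero_mul]; exact mul_nonneg (mul_nonneg hL.le (hα 0).le) hσ
    · have hzk := (hz_adapted k).imp_left (·.mono (noiseHistory_mono (2 * k).le_succ) le_rfl)
      have hwk := hS.w_adapted hF (hξi _) (hz_adapted k)
      exact key (2 * k + 1) (hα k).le (hS.z_succ k hk)
        ⟨.anchoredStep hFm hzk.1 hwk.1, hzk.2.anchoredStep hF hwk.2⟩

/-- **Bounded noise correlations for S-FEG** (Lemma A.2 of the paper).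
The noise family is indexed by half-integers: `ξ (2*k)` is the paper's `ξ_k`
and `ξ (2*k+1)` is the paper's `ξ_{k+1/2}`; similarly `σsq n` denotes the
variance `σ_{n/2}²`.  For the Class S-FEG iterates (with `β₀ = 1`, so that
`z_{1/2} = z₀` and `z₁ = z₀ - α₀(F z₀ + ξ₀)`):
(i) `|E⟪F z₁, ξ₀⟫| ≤ L α₀ σ₀²`;
(ii) `|E⟪F z_{k+1/2}, ξ_k⟫| ≤ L (1-β_k) α_k σ_k²` for all `k ≥ 0`;
(iii) `|E⟪F z_{k+1}, ξ_{k+1/2}⟫| ≤ L α_k σ_{k+1/2}²` for all `k ≥ 0`. -/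
theorem sfeg_bounded_noise_correlations
    {d : ℕ} {Ω : Type*} [MeasurableSpace Ω] (μ : Measure Ω) [IsProbabilityMeasure μ]
    (L : ℝ) (hL : 0 < L)
    (F : EuclideanSpace ℝ (Fin d) → EuclideanSpace ℝ (Fin d))
    (hLip : ∀ z z' : EuclideanSpace ℝ (Fin d), ‖F z - F z'‖ ≤ L * ‖z - z'‖)
    (hMono : ∀ z z' : EuclideanSpace ℝ (Fin d), 0 ≤ ⟪F z - F z', z - z'⟫)
    (z0 : EuclideanSpace ℝ (Fin d))
    (ξ : ℕ → Ω → EuclideanSpace ℝ (Fin d))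
    (hmeas : ∀ n, Measurable (ξ n))
    (hindep : iIndepFun ξ μ)
    (hmean : ∀ n, ∫ ω, ξ n ω ∂μ = 0)
    (σsq : ℕ → ℝ)
    (hint : ∀ n, Integrable (fun ω => ‖ξ n ω‖ ^ 2) μ)
    (hvar : ∀ n, ∫ ω, ‖ξ n ω‖ ^ 2 ∂μ = σsq n)
    (α β : ℕ → ℝ)
    (hα : ∀ k, 0 < α k)
    (hβ0 : β 0 = 1)
    (hβ : ∀ k : ℕ, 1 ≤ k → β k ∈ Set.Ioo (0 : ℝ) 1)
    (z w : ℕ → Ω → EuclideanSpace ℝ (Fin d))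
    (hz0 : ∀ ω, z 0 ω = z0)
    (hw : ∀ (k : ℕ) (ω : Ω), w k ω = z k ω + β k • (z0 - z k ω)
      - ((1 - β k) * α k) • (F (z k ω) + ξ (2 * k) ω))
    (hz1 : ∀ ω : Ω, z 1 ω = z0 - α 0 • (F z0 + ξ 0 ω))
    (hz : ∀ (k : ℕ), 1 ≤ k → ∀ ω : Ω, z (k + 1) ω = z k ω + β k • (z0 - z k ω)
      - α k • (F (w k ω) + ξ (2 * k + 1) ω)) :
    |∫ ω, ⟪F (z 1 ω), ξ 0 ω⟫ ∂μ| ≤ L * α 0 * σsq 0 ∧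
    (∀ k : ℕ, |∫ ω, ⟪F (w k ω), ξ (2 * k) ω⟫ ∂μ|
      ≤ L * (1 - β k) * α k * σsq (2 * k)) ∧
    (∀ k : ℕ, |∫ ω, ⟪F (z (k + 1) ω), ξ (2 * k + 1) ω⟫ ∂μ|
      ≤ L * α k * σsq (2 * k + 1)) :=
  sfeg_bounded_noise_correlations_general μ L hL F hLip z0 ξ hmeas hindep hmean σsq hint hvar α β hα
    hβ0 hβ z w hz0 hw hz1 hz
end

section
/- Let F : ℝ^d → ℝ^d be L-Lipschitz and monotone, z₀ ∈ ℝ^d deterministic, and let (ξ_{k/2})_{k≥0} be mutually independent ℝ^d-valued random variables with E[ξ_{k/2}] = 0 and E[‖ξ_{k/2}‖²] = σ_{k/2}² < ∞. Let {α_k}_{k≥0} and {β_k}_{k≥0} satisfy α₀ > 0, α_k ∈ (0, 1/L] for k ≥ 1, β₀ = 1, β_k ∈ (0,1) for k ≥ 1, and ((1−β_{k+1})α_{k+1})/(2β_{k+1}) ≤ α_k/(2β_k) for all k ≥ 0, and generate z_{k+1/2} = z_k + β_k(z₀ − z_k) − (1−β_k)α_k(F z_k + ξ_k), z_{k+1}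 = z_k + β_k(z₀ − z_k) − α_k(F z_{k+1/2} + ξ_{k+1/2}). Define b₁ = 1, b_{k+1} = b_k/(1−β_k), a_k = b_k(1−β_k)α_k/(2β_k) for k ≥ 1, and V_k = a_k‖F z_k‖² − b_k⟨F z_k, z₀ − z_k⟩. Then for all k ≥ 1, E[V_k] − E[V_{k+1}] ≥ −(b_k α_k (1 + 2Lα_k)/(2β_k)) · ((1−β_k)σ_k² + σ_{k+1/2}²/(1−β_k)). -/
/-!
Multiplied by `2β(1-β)`, the decrease `V_k - V_{k+1}` equals `bα (‖(1-β) F z_k - H‖² -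
‖F z_{k+1} - H‖²)` plus two nonnegative terms (monotonicity of `F` and the step-size condition),
where `H = F z_{k+1/2} + ξ_{k+1/2}` is the oracle answer used in the step. The Lipschitz bound
`‖F z_{k+1} - F z_{k+1/2}‖ ≤ ‖z_{k+1} - z_{k+1/2}‖ / α` bounds this bracket below by a quadratic
form in the two noises plus inner products `⟪X, ξ_k⟫ + ⟪Y, ξ_{k+1/2}⟫` whose left factors depend
only on earlier noises. By independence these have mean zero, and only the variances survive the
expectation.
-/

open MeasureTheory ProbabilityTheory
open scoped RealInnerProductSpace NNReal

theorem LipschitzWith.memLp_comp {Ω E E' : Type*} [MeasurableSpace Ω] {μ : Measure Ω}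
    [IsFiniteMeasure μ] [NormedAddCommGroup E] [NormedAddCommGroup E'] {K : ℝ≥0} {F : E → E'}
    (hF : LipschitzWith K F) {p : ENNReal} {f : Ω → E} (hf : MemLp f p μ) :
    MemLp (fun ω => F (f ω)) p μ := by
  have h0 : LipschitzWith K (fun x => F x - F 0) := by
    simpa using hF.sub (LipschitzWith.const (F 0))
  convert (h0.comp_memLp (sub_self _) hf).add (memLp_const (F 0)) using 1
  funext ω
  simp

section Probability

variable {Ω E : Type*} [MeasurableSpace Ω] {μ : Measure Ω}
  [NormedAddCommGroup E] [InnerProductSpace ℝ E]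

theorem MeasureTheory.MemLp.integrable_inner {f g : Ω → E} (hf : MemLp f 2 μ) (hg : MemLp g 2 μ) :
    Integrable (fun ω => ⟪f ω, g ω⟫) μ :=
  memLp_one_iff_integrable.1 ((innerSL ℝ).memLp_of_bilin 1 hf hg)

theorem ProbabilityTheory.IndepFun.integral_inner_eq_zero_s12 [CompleteSpace E] [MeasurableSpace E]
    [BorelSpace E] {X Y : Ω → E} (hXY : IndepFun X Y μ) (hX : Integrable X μ) (hY : Integrable Y μ)
    (hY0 : ∫ ω, Y ω ∂μ = 0) :
    ∫ ω, ⟪X ω, Y ω⟫ ∂μ = 0 := by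
  have h := hXY.integral_bilin hX hY (innerSL ℝ)
  rw [hY0, map_zero] at h
  exact h

theorem integrable_and_integral_sq_norm_add_inner_of_indepFun [IsFiniteMeasure μ]
    [CompleteSpace E] [MeasurableSpace E] [BorelSpace E] {X Y u u' : Ω → E}
    (hXu : IndepFun X u μ) (hYu' : IndepFun Y u' μ) (hX : Integrable X μ) (hY : Integrable Y μ)
    (hu : MemLp u 2 μ) (hu' : MemLp u' 2 μ) (hu0 : ∫ ω, u ω ∂μ = 0)
    (hu0' : ∫ ω, u' ω ∂μ = 0) (c θ : ℝ) :
    Integrable (fun ω => -c * (θ ^ 2 * ‖u ω‖ ^ 2 + ‖u' ω‖ ^ 2) + 2 * ⟪X ω, u ω⟫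
        + 2 * ⟪Y ω, u' ω⟫) μ ∧
    ∫ ω, (-c * (θ ^ 2 * ‖u ω‖ ^ 2 + ‖u' ω‖ ^ 2) + 2 * ⟪X ω, u ω⟫ + 2 * ⟪Y ω, u' ω⟫) ∂μ
      = -c * (θ ^ 2 * ∫ ω, ‖u ω‖ ^ 2 ∂μ + ∫ ω, ‖u' ω‖ ^ 2 ∂μ) := by
  have hu2 := hu.integrable_norm_pow two_ne_zero
  have hu2' := hu'.integrable_norm_pow two_ne_zero
  have i1 : Integrable (fun ω => -c * (θ ^ 2 * ‖u ω‖ ^ 2 + ‖u' ω‖ ^ 2)) μ :=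
    ((hu2.const_mul _).add hu2').const_mul _
  have i2 : Integrable (fun ω => 2 * ⟪X ω, u ω⟫) μ :=
    (hXu.integrable_bilin hX (hu.integrable one_le_two) (innerSL ℝ)).const_mul 2
  have i3 : Integrable (fun ω => 2 * ⟪Y ω, u' ω⟫) μ :=
    (hYu'.integrable_bilin hY (hu'.integrable one_le_two) (innerSL ℝ)).const_mul 2
  have i12 : Integrable (fun ω => -c * (θ ^ 2 * ‖u ω‖ ^ 2 + ‖u' ω‖ ^ 2) + 2 * ⟪X ω, u ω⟫) μ :=
    i1.add i2
  refine ⟨i12.add i3, ?_⟩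
  rw [integral_add i12 i3, integral_add i1 i2, integral_const_mul, integral_const_mul,
    integral_const_mul, integral_add (hu2.const_mul _) hu2', integral_const_mul,
    hXu.integral_inner_eq_zero_s12 hX (hu.integrable one_le_two) hu0,
    hYu'.integral_inner_eq_zero_s12 hY (hu'.integrable one_le_two) hu0']
  ring

end Probability

section NoiseSigma

variable {Ω E : Type*} [MeasurableSpace E]

abbrev noiseSigma (ξ : ℕ → Ω → E) (n : ℕ) : MeasurableSpace Ω :=
  ⨆ i < n, MeasurableSpace.comap (ξ i) inferInstance

variable {ξ : ℕ → Ω → E}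

theorem noiseSigma_mono {n m : ℕ} (h : n ≤ m) : noiseSigma ξ n ≤ noiseSigma ξ m :=
  biSup_mono fun _ hi => lt_of_lt_of_le hi h

theorem measurable_noiseSigma {i n : ℕ} (h : i < n) : Measurable[noiseSigma ξ n] (ξ i) :=
  Measurable.of_comap_le (le_biSup (fun i => MeasurableSpace.comap (ξ i) inferInstance) h)

theorem ProbabilityTheory.iIndepFun.indepFun_of_measurable_noiseSigma [MeasurableSpace Ω]
    {μ : Measure Ω} (hindep : iIndepFun ξ μ) (hξ : ∀ i, Measurable (ξ i)) {n m : ℕ} (hnm : n ≤ m)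
    {f : Ω → E} (hf : Measurable[noiseSigma ξ n] f) : IndepFun f (ξ m) μ := by
  have h := indep_iSup_of_disjoint (fun i => (hξ i).comap_le)
    ((iIndepFun_iff_iIndep _ _ _).1 hindep)
    (S := Set.Iio n) (T := {m}) (by simpa using hnm)
  rw [iSup_singleton] at h
  exact (IndepFun_iff_Indep _ _ _).2 (indep_of_indep_of_le_left h hf.comap_le)

end NoiseSigma

section Deterministic

variable {E : Type*} [NormedAddCommGroup E] [InnerProductSpace ℝ E]

theorem LipschitzWith.neg_mul_le_inner_sub {K : ℝ≥0} {F : E → E} (hF : LipschitzWith K F)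
    (x y u : E) : -(K * ‖x - y‖ * ‖u‖) ≤ ⟪F x - F y, u⟫ :=
  calc -(K * ‖x - y‖ * ‖u‖) ≤ -(‖F x - F y‖ * ‖u‖) :=
        neg_le_neg (mul_le_mul_of_nonneg_right (hF.norm_sub_le x y) (norm_nonneg u))
    _ ≤ ⟪F x - F y, u⟫ := neg_le_of_abs_le (abs_real_inner_le_norm _ _)

/-- The paper's potential `V_k` is `anchoredPotential F z0 (a k) (b k) (z k)`. -/
def anchoredPotential (F : E → E) (z0 : E) (a b : ℝ) (z : E) : ℝ :=
  a * ‖F z‖ ^ 2 - b * ⟪F z, z0 - z⟫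

theorem anchoredPotential_sub_ge {F : E → E} (hF : ∀ x y, 0 ≤ ⟪F x - F y, x - y⟫)
    {z0 z z' H : E} {α β a b a' b' : ℝ} (hβ0 : 0 < β) (hβ1 : β < 1) (hb : 0 ≤ b)
    (hz' : z' = z + β • (z0 - z) - α • H) (ha : a = b * (1 - β) * α / (2 * β))
    (hb' : b' = b / (1 - β)) (ha' : a' ≤ b' * α / (2 * β)) :
    b * α / (2 * β * (1 - β)) * (‖(1 - β) • F z - H‖ ^ 2 - ‖F z' - H‖ ^ 2)
      ≤ anchoredPotential F z0 a b z - anchoredPotential F z0 a' b' z' := by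
  have hθ : 0 < 1 - β := sub_pos.2 hβ1
  have hc : 0 < 2 * β * (1 - β) := by positivity
  have hz0 : z0 - z' = (1 - β) • (z0 - z) + α • H := by rw [hz']; module
  have hzz : z - z' = α • H - β • (z0 - z) := by rw [hz']; module
  have key : 2 * β * (1 - β) * (anchoredPotential F z0 a b z - anchoredPotential F z0 a' b' z')
      = b * α * (‖(1 - β) • F z - H‖ ^ 2 - ‖F z' - H‖ ^ 2)
        + (b * α - 2 * β * (1 - β) * a') * ‖F z'‖ ^ 2
        + 2 * (1 - β) * b * ⟪F z - F z', z - z'⟫ := by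
    subst ha hb'
    rw [anchoredPotential, anchoredPotential, hz0, hzz, norm_sub_sq_real, norm_sub_sq_real,
      norm_smul, Real.norm_eq_abs, abs_of_pos hθ]
    simp only [inner_add_right, inner_sub_left, inner_sub_right, real_inner_smul_left,
      real_inner_smul_right]
    field_simp
    ring
  have hmono : 0 ≤ 2 * (1 - β) * b * ⟪F z - F z', z - z'⟫ := by
    have := hF z z'
    positivity
  have hcoef : 2 * β * (1 - β) * a' ≤ b * α :=
    calc 2 * β * (1 - β) * a' ≤ 2 * β * (1 - β) * (b' * α / (2 * β)) := by gcongr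
      _ = b * α := by rw [hb']; field_simp
  rw [div_mul_eq_mul_div, div_le_iff₀' hc, key]
  linarith [mul_nonneg (sub_nonneg.2 hcoef) (sq_nonneg ‖F z'‖)]

/-- In the S-FEG step, `p = z + β (z0 - z)` is the anchored point, `g = F z`, `θ = 1 - β`,
`u`, `u'` are the two noises, and `w`, `z'` are the half and full iterates. -/
theorem norm_sq_sub_norm_sq_ge_of_extragradient {K : ℝ≥0} {F : E → E} (hF : LipschitzWith K F)
    {α θ : ℝ} (hα : 0 ≤ α) (hKα : K * α ≤ 1) (hθ : 0 ≤ θ) {p g u u' w z' : E}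
    (hw : w = p - (θ * α) • (g + u)) (hz' : z' = p - α • (F w + u')) :
    -(1 + 2 * K * α) * (θ ^ 2 * ‖u‖ ^ 2 + ‖u'‖ ^ 2)
        + 2 * ⟪θ • (F (p - (θ * α) • g) - θ • g), u⟫ + 2 * ⟪F (p - α • F w) - F w + θ • u, u'⟫
      ≤ ‖θ • g - (F w + u')‖ ^ 2 - ‖F z' - (F w + u')‖ ^ 2 := by
  have hext : ‖F z' - F w‖ ≤ ‖θ • (g + u) - (F w + u')‖ :=
    calc ‖F z' - F w‖ ≤ K * ‖z' - w‖ := hF.norm_sub_le z' w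
      _ = K * α * ‖θ • (g + u) - (F w + u')‖ := by
        rw [show z' - w = α • (θ • (g + u) - (F w + u')) by rw [hz', hw]; module,
          norm_smul, Real.norm_eq_abs, abs_of_nonneg hα, mul_assoc]
      _ ≤ ‖θ • (g + u) - (F w + u')‖ :=
        mul_le_of_le_one_left (norm_nonneg _) hKα
  have hsq : ‖F z' - F w‖ ^ 2
      ≤ ‖θ • g - (F w + u')‖ ^ 2 + 2 * ⟪θ • g - (F w + u'), θ • u⟫ + ‖θ • u‖ ^ 2 := by
    rw [← norm_add_sq_real, ← show θ • (g + u) - (F w + u') = (θ • g - (F w + u')) + θ • u by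
      module]
    exact pow_le_pow_left₀ (norm_nonneg _) hext 2
  have hhalf : -(K * (θ * α * ‖u‖) * ‖u‖) ≤ ⟪F w - F (p - (θ * α) • g), u⟫ := by
    convert hF.neg_mul_le_inner_sub w (p - (θ * α) • g) u using 4
    rw [hw, show p - (θ * α) • (g + u) - (p - (θ * α) • g) = -((θ * α) • u) by module,
      norm_neg, norm_smul, Real.norm_eq_abs, abs_of_nonneg (mul_nonneg hθ hα)]
  have hfull : -(K * (α * ‖u'‖) * ‖u'‖) ≤ ⟪F z' - F (p - α • F w), u'⟫ := by
    convert hF.neg_mul_le_inner_sub z' (p - α • F w) u' using 4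
    rw [hz', show p - α • (F w + u') - (p - α • F w) = -(α • u') by module,
      norm_neg, norm_smul, Real.norm_eq_abs, abs_of_nonneg hα]
  have hhalf' := mul_le_mul_of_nonneg_left hhalf (by positivity : (0 : ℝ) ≤ 2 * θ)
  rw [norm_smul, Real.norm_eq_abs, abs_of_nonneg hθ, mul_pow] at hsq
  rw [show F z' - (F w + u') = (F z' - F w) - u' by module, norm_sub_sq_real (F z' - F w)]
  simp only [inner_add_left, inner_sub_left,
    real_inner_smul_left, real_inner_smul_right, real_inner_comm u u'] at hsq hhalf' hfull ⊢
  linarith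

end Deterministic

section Iteration

variable {Ω E : Type*} [NormedAddCommGroup E] [NormedSpace ℝ E]

structure IsSFEGIteration (F : E → E) (z0 : E) (ξ : ℕ → Ω → E) (α β : ℕ → ℝ)
    (z w : ℕ → Ω → E) : Prop where
  init : ∀ ω, z 0 ω = z0
  half_step : ∀ k ω, w k ω = z k ω + β k • (z0 - z k ω)
    - ((1 - β k) * α k) • (F (z k ω) + ξ (2 * k) ω)
  step : ∀ k ω, z (k + 1) ω = z k ω + β k • (z0 - z k ω) - α k • (F (w k ω) + ξ (2 * k + 1) ω)

variable {F : E → E} {z0 : E} {ξ : ℕ → Ω → E} {α β : ℕ → ℝ} {z w : ℕ → Ω → E}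

theorem IsSFEGIteration.memLp [MeasurableSpace Ω] {μ : Measure Ω} [IsFiniteMeasure μ]
    {K : ℝ≥0} (hF : LipschitzWith K F) (hξ : ∀ n, MemLp (ξ n) 2 μ)
    (h : IsSFEGIteration F z0 ξ α β z w) (k : ℕ) :
    MemLp (z k) 2 μ ∧ MemLp (w k) 2 μ := by
  have half : ∀ k, MemLp (z k) 2 μ → MemLp (w k) 2 μ := fun k hzk => by
    rw [funext (h.half_step k)]
    exact (hzk.add (((memLp_const z0).sub hzk).const_smul (β k))).sub
      (((hF.memLp_comp hzk).add (hξ (2 * k))).const_smul ((1 - β k) * α k))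
  induction k with
  | zero =>
    have hz0 : MemLp (z 0) 2 μ := by rw [funext h.init]; exact memLp_const z0
    exact ⟨hz0, half 0 hz0⟩
  | succ k ih =>
    have hzk : MemLp (z (k + 1)) 2 μ := by
      rw [funext (h.step k)]
      exact (ih.1.add (((memLp_const z0).sub ih.1).const_smul (β k))).sub
        (((hF.memLp_comp ih.2).add (hξ (2 * k + 1))).const_smul (α k))
    exact ⟨hzk, half (k + 1) hzk⟩

variable [MeasurableSpace E] [BorelSpace E] [SecondCountableTopology E]

theorem IsSFEGIteration.measurable (hF : Measurable F)
    (h : IsSFEGIteration F z0 ξ α β z w) (k : ℕ) :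
    Measurable[noiseSigma ξ (2 * k)] (z k) ∧ Measurable[noiseSigma ξ (2 * k + 1)] (w k) := by
  have half : ∀ k, Measurable[noiseSigma ξ (2 * k)] (z k) →
      Measurable[noiseSigma ξ (2 * k + 1)] (w k) := fun k hzk => by
    have hzk' : Measurable[noiseSigma ξ (2 * k + 1)] (z k) :=
      hzk.mono (noiseSigma_mono (by omega)) le_rfl
    have hξk : Measurable[noiseSigma ξ (2 * k + 1)] (ξ (2 * k)) :=
      measurable_noiseSigma (by omega)
    rw [funext (h.half_step k)]
    fun_prop
  induction k with
  | zero =>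
    have hz0 : Measurable[noiseSigma ξ (2 * 0)] (z 0) := by
      rw [funext h.init]; exact measurable_const
    exact ⟨hz0, half 0 hz0⟩
  | succ k ih =>
    have hzk : Measurable[noiseSigma ξ (2 * (k + 1))] (z (k + 1)) := by
      have hz' : Measurable[noiseSigma ξ (2 * (k + 1))] (z k) :=
        ih.1.mono (noiseSigma_mono (by omega)) le_rfl
      have hw' : Measurable[noiseSigma ξ (2 * (k + 1))] (w k) :=
        ih.2.mono (noiseSigma_mono (by omega)) le_rfl
      have hξk : Measurable[noiseSigma ξ (2 * (k + 1))] (ξ (2 * k + 1)) :=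
        measurable_noiseSigma (by omega)
      rw [funext (h.step k)]
      fun_prop
    exact ⟨hzk, half (k + 1) hzk⟩

end Iteration

section StochasticStep

variable {Ω E : Type*} [MeasurableSpace Ω] {μ : Measure Ω} [IsFiniteMeasure μ]
  [NormedAddCommGroup E] [InnerProductSpace ℝ E]

theorem integrable_anchoredPotential {K : ℝ≥0} {F : E → E}
    (hF : LipschitzWith K F) (z0 : E) (a b : ℝ) {f : Ω → E} (hf : MemLp f 2 μ) :
    Integrable (fun ω => anchoredPotential F z0 a b (f ω)) μ :=
  (((hF.memLp_comp hf).integrable_norm_pow two_ne_zero).const_mul a).sub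
    (((hF.memLp_comp hf).integrable_inner ((memLp_const z0).sub hf)).const_mul b)

variable [CompleteSpace E] [MeasurableSpace E] [BorelSpace E] [SecondCountableTopology E]
  {F : E → E} {z0 : E} {ξ : ℕ → Ω → E} {α β : ℕ → ℝ} {z w : ℕ → Ω → E}

theorem IsSFEGIteration.integral_anchoredPotential_sub_ge {K : ℝ≥0} (hF : LipschitzWith K F)
    (hMono : ∀ x y, 0 ≤ ⟪F x - F y, x - y⟫) (hξ : ∀ n, Measurable (ξ n)) (hindep : iIndepFun ξ μ)
    (hξ2 : ∀ n, MemLp (ξ n) 2 μ) (hmean : ∀ n, ∫ ω, ξ n ω ∂μ = 0)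
    (h : IsSFEGIteration F z0 ξ α β z w) {k : ℕ}
    {a b a' b' : ℝ} (hαk : 0 < α k) (hKα : K * α k ≤ 1) (hβk : 0 < β k) (hβk1 : β k < 1)
    (hb : 0 ≤ b) (ha : a = b * (1 - β k) * α k / (2 * β k)) (hb' : b' = b / (1 - β k))
    (ha' : a' ≤ b' * α k / (2 * β k)) :
    -(b * α k * (1 + 2 * K * α k) / (2 * β k)) * ((1 - β k) * ∫ ω, ‖ξ (2 * k) ω‖ ^ 2 ∂μ
        + (∫ ω, ‖ξ (2 * k + 1) ω‖ ^ 2 ∂μ) / (1 - β k))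
      ≤ (∫ ω, anchoredPotential F z0 a b (z k ω) ∂μ)
        - ∫ ω, anchoredPotential F z0 a' b' (z (k + 1) ω) ∂μ := by
  have hθ : 0 < 1 - β k := sub_pos.2 hβk1
  have hFm : Measurable F := hF.continuous.measurable
  obtain ⟨hzk, hwk⟩ := h.measurable hFm k
  have hξk : Measurable[noiseSigma ξ (2 * k + 1)] (ξ (2 * k)) :=
    measurable_noiseSigma (by omega)
  have hzk' : Measurable[noiseSigma ξ (2 * k + 1)] (z k) :=
    hzk.mono (noiseSigma_mono (by omega)) le_rfl
  obtain ⟨hzk2, hwk2⟩ := h.memLp hF hξ2 k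
  have hp2 := hzk2.add (((memLp_const z0).sub hzk2).const_smul (β k))
  have hg2 := hF.memLp_comp hzk2
  have hh2 := hF.memLp_comp hwk2
  obtain ⟨hDint, hD⟩ := integrable_and_integral_sq_norm_add_inner_of_indepFun
    (X := fun ω => (1 - β k) • (F (z k ω + β k • (z0 - z k ω) - ((1 - β k) * α k) • F (z k ω))
      - (1 - β k) • F (z k ω)))
    (Y := fun ω => F (z k ω + β k • (z0 - z k ω) - α k • F (w k ω)) - F (w k ω)
      + (1 - β k) • ξ (2 * k) ω) (u := ξ (2 * k)) (u' := ξ (2 * k + 1))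
    (hindep.indepFun_of_measurable_noiseSigma hξ le_rfl (by fun_prop))
    (hindep.indepFun_of_measurable_noiseSigma hξ le_rfl (by fun_prop))
    ((((hF.memLp_comp (hp2.sub (hg2.const_smul _))).sub (hg2.const_smul _)).const_smul
      _).integrable one_le_two)
    ((((hF.memLp_comp (hp2.sub (hh2.const_smul _))).sub hh2).add
      ((hξ2 _).const_smul _)).integrable one_le_two)
    (hξ2 _) (hξ2 _) (hmean _) (hmean _) (1 + 2 * K * α k) (1 - β k)
  have hV : ∀ j a b, Integrable (fun ω => anchoredPotential F z0 a b (z j ω)) μ :=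
    fun j a b => integrable_anchoredPotential hF z0 a b (h.memLp hF hξ2 j).1
  rw [← integral_sub (hV k a b) (hV (k + 1) a' b')]
  refine le_trans (le_of_eq ?_)
    (integral_mono (hDint.const_mul (b * α k / (2 * β k * (1 - β k))))
      ((hV k a b).sub (hV (k + 1) a' b')) fun ω => ?_)
  · rw [integral_const_mul, hD]
    field_simp
  · exact (mul_le_mul_of_nonneg_left (norm_sq_sub_norm_sq_ge_of_extragradient hF hαk.le hKα
      hθ.le (h.half_step k ω) (h.step k ω)) (by positivity)).trans
      (anchoredPotential_sub_ge hMono hβk hβk1 hb (h.step k ω) ha hb' ha')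

end StochasticStep

theorem pos_of_eq_div_one_sub {b β : ℕ → ℝ} (hb1 : b 1 = 1)
    (hb : ∀ k, 1 ≤ k → b (k + 1) = b k / (1 - β k)) (hβ : ∀ k, 1 ≤ k → β k < 1) :
    ∀ k, 1 ≤ k → 0 < b k := by
  intro k hk
  induction k, hk using Nat.le_induction with
  | base => rw [hb1]; exact one_pos
  | succ k hk ih => rw [hb k hk]; exact div_pos ih (sub_pos.2 (hβ k hk))

/-- The noise `ξ (2 * k)` is the paper's `ξ_k`, `ξ (2 * k + 1)` is `ξ_{k+1/2}`, and `σsq n` is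
`σ_{n/2}²`. -/
theorem sfeg_potential_lemma_general
    {d : ℕ} {Ω : Type*} [MeasurableSpace Ω] (μ : Measure Ω) [IsProbabilityMeasure μ]
    (L : ℝ) (hL : 0 < L)
    (F : EuclideanSpace ℝ (Fin d) → EuclideanSpace ℝ (Fin d))
    (hLip : ∀ z z' : EuclideanSpace ℝ (Fin d), ‖F z - F z'‖ ≤ L * ‖z - z'‖)
    (hMono : ∀ z z' : EuclideanSpace ℝ (Fin d), 0 ≤ ⟪F z - F z', z - z'⟫)
    (z0 : EuclideanSpace ℝ (Fin d))
    (ξ : ℕ → Ω → EuclideanSpace ℝ (Fin d))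
    (hmeas : ∀ n, Measurable (ξ n))
    (hindep : iIndepFun ξ μ)
    (hmean : ∀ n, ∫ ω, ξ n ω ∂μ = 0)
    (σsq : ℕ → ℝ)
    (hint : ∀ n, Integrable (fun ω => ‖ξ n ω‖ ^ 2) μ)
    (hvar : ∀ n, ∫ ω, ‖ξ n ω‖ ^ 2 ∂μ = σsq n)
    (α β : ℕ → ℝ)
    (hα : ∀ k : ℕ, 1 ≤ k → 0 < α k ∧ α k ≤ 1 / L)
    (hβ : ∀ k : ℕ, 1 ≤ k → β k ∈ Set.Ioo (0 : ℝ) 1)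
    (hcoef : ∀ k : ℕ,
      (1 - β (k + 1)) * α (k + 1) / (2 * β (k + 1)) ≤ α k / (2 * β k))
    (z w : ℕ → Ω → EuclideanSpace ℝ (Fin d))
    (hz0 : ∀ ω, z 0 ω = z0)
    (hw : ∀ (k : ℕ) (ω : Ω), w k ω = z k ω + β k • (z0 - z k ω)
      - ((1 - β k) * α k) • (F (z k ω) + ξ (2 * k) ω))
    (hz : ∀ (k : ℕ) (ω : Ω), z (k + 1) ω = z k ω + β k • (z0 - z k ω)
      - α k • (F (w k ω) + ξ (2 * k + 1) ω))
    (a b : ℕ → ℝ)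
    (hb1 : b 1 = 1)
    (hb : ∀ k : ℕ, 1 ≤ k → b (k + 1) = b k / (1 - β k))
    (ha : ∀ k : ℕ, 1 ≤ k → a k = b k * (1 - β k) * α k / (2 * β k)) :
    ∀ k : ℕ, 1 ≤ k →
      -(b k * α k * (1 + 2 * L * α k) / (2 * β k))
          * ((1 - β k) * σsq (2 * k) + σsq (2 * k + 1) / (1 - β k))
        ≤ (∫ ω, (a k * ‖F (z k ω)‖ ^ 2 - b k * ⟪F (z k ω), z0 - z k ω⟫) ∂μ)
          - (∫ ω, (a (k + 1) * ‖F (z (k + 1) ω)‖ ^ 2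
              - b (k + 1) * ⟪F (z (k + 1) ω), z0 - z (k + 1) ω⟫) ∂μ) := by
  intro k hk
  obtain ⟨hβk, hβk1⟩ := hβ k hk
  obtain ⟨hαk, hαkL⟩ := hα k hk
  have hF : LipschitzWith ⟨L, hL.le⟩ F :=
    LipschitzWith.of_dist_le_mul fun x y => by rw [dist_eq_norm, dist_eq_norm]; exact hLip x y
  have hbpos := pos_of_eq_div_one_sub hb1 hb fun j hj => (hβ j hj).2
  have ha' : a (k + 1) ≤ b (k + 1) * α k / (2 * β k) :=
    calc a (k + 1) = b (k + 1) * ((1 - β (k + 1)) * α (k + 1) / (2 * β (k + 1))) := by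
          rw [ha (k + 1) (by omega)]; ring
      _ ≤ b (k + 1) * (α k / (2 * β k)) :=
          mul_le_mul_of_nonneg_left (hcoef k) (hbpos (k + 1) (by omega)).le
      _ = b (k + 1) * α k / (2 * β k) := by ring
  have hstep := IsSFEGIteration.integral_anchoredPotential_sub_ge hF hMono hmeas hindep
    (fun n => (memLp_two_iff_integrable_sq_norm (hmeas n).aestronglyMeasurable).2 (hint n))
    hmean ⟨hz0, hw, hz⟩ hαk (by rwa [le_div_iff₀ hL, mul_comm] at hαkL) hβk hβk1
    (hbpos k hk).le (ha k hk) (hb k hk) ha'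
  rwa [hvar, hvar] at hstep

/-- **Stochastic potential lemma for Class S-FEG** (Lemma A.1 of the paper),
inductive step.  The noise family is indexed by half-integers: `ξ (2*k)` is the
paper's `ξ_k` and `ξ (2*k+1)` is the paper's `ξ_{k+1/2}`; `σsq n` denotes the
variance `σ_{n/2}²`.  For every `k ≥ 1`,
`E[V_k] - E[V_{k+1}] ≥ -(b_k α_k (1+2Lα_k)/(2β_k)) ((1-β_k)σ_k² + σ_{k+1/2}²/(1-β_k))`. -/
theorem sfeg_potential_lemma
    {d : ℕ} {Ω : Type*} [MeasurableSpace Ω] (μ : Measure Ω) [IsProbabilityMeasure μ]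
    (L : ℝ) (hL : 0 < L)
    (F : EuclideanSpace ℝ (Fin d) → EuclideanSpace ℝ (Fin d))
    (hLip : ∀ z z' : EuclideanSpace ℝ (Fin d), ‖F z - F z'‖ ≤ L * ‖z - z'‖)
    (hMono : ∀ z z' : EuclideanSpace ℝ (Fin d), 0 ≤ ⟪F z - F z', z - z'⟫)
    (z0 : EuclideanSpace ℝ (Fin d))
    (ξ : ℕ → Ω → EuclideanSpace ℝ (Fin d))
    (hmeas : ∀ n, Measurable (ξ n))
    (hindep : iIndepFun ξ μ)
    (hmean : ∀ n, ∫ ω, ξ n ω ∂μ = 0)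
    (σsq : ℕ → ℝ)
    (hint : ∀ n, Integrable (fun ω => ‖ξ n ω‖ ^ 2) μ)
    (hvar : ∀ n, ∫ ω, ‖ξ n ω‖ ^ 2 ∂μ = σsq n)
    (α β : ℕ → ℝ)
    (hα0 : 0 < α 0)
    (hα : ∀ k : ℕ, 1 ≤ k → 0 < α k ∧ α k ≤ 1 / L)
    (hβ0 : β 0 = 1)
    (hβ : ∀ k : ℕ, 1 ≤ k → β k ∈ Set.Ioo (0 : ℝ) 1)
    (hcoef : ∀ k : ℕ,
      (1 - β (k + 1)) * α (k + 1) / (2 * β (k + 1)) ≤ α k / (2 * β k))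
    (z w : ℕ → Ω → EuclideanSpace ℝ (Fin d))
    (hz0 : ∀ ω, z 0 ω = z0)
    (hw : ∀ (k : ℕ) (ω : Ω), w k ω = z k ω + β k • (z0 - z k ω)
      - ((1 - β k) * α k) • (F (z k ω) + ξ (2 * k) ω))
    (hz : ∀ (k : ℕ) (ω : Ω), z (k + 1) ω = z k ω + β k • (z0 - z k ω)
      - α k • (F (w k ω) + ξ (2 * k + 1) ω))
    (a b : ℕ → ℝ)
    (hb1 : b 1 = 1)
    (hb : ∀ k : ℕ, 1 ≤ k → b (k + 1) = b k / (1 - β k))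
    (ha : ∀ k : ℕ, 1 ≤ k → a k = b k * (1 - β k) * α k / (2 * β k)) :
    ∀ k : ℕ, 1 ≤ k →
      -(b k * α k * (1 + 2 * L * α k) / (2 * β k))
          * ((1 - β k) * σsq (2 * k) + σsq (2 * k + 1) / (1 - β k))
        ≤ (∫ ω, (a k * ‖F (z k ω)‖ ^ 2 - b k * ⟪F (z k ω), z0 - z k ω⟫) ∂μ)
          - (∫ ω, (a (k + 1) * ‖F (z (k + 1) ω)‖ ^ 2
              - b (k + 1) * ⟪F (z (k + 1) ω), z0 - z (k + 1) ω⟫) ∂μ) :=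
  sfeg_potential_lemma_general μ L hL F hLip hMono z0 ξ hmeas hindep hmean σsq hint hvar α β hα hβ
    hcoef z w hz0 hw hz a b hb1 hb ha
end

section
/- Let F : ℝ^d → ℝ^d be L-Lipschitz and monotone, z₀ ∈ ℝ^d deterministic, α₀ > 0, and let ξ₀ be an ℝ^d-valued random variable with E[ξ₀] = 0 and E[‖ξ₀‖²] = σ₀² < ∞. Let z₁ = z₀ − α₀(F z₀ + ξ₀). Let α₁ > 0, β₁ ∈ (0,1) satisfy ((1−β₁)α₁)/(2β₁) ≤ α₀/2, and set a₁ = (1−β₁)α₁/(2β₁), V₀ = (α₀(L²α₀² − 1)/2)‖F z₀‖², V₁ = a₁‖F z₁‖² − ⟨F z₁, z₀ − z₁⟩. Then E[V₀] − E[V₁] ≥ −(L²α₀³/2 + Lα₀²)σ₀². -/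
open MeasureTheory ProbabilityTheory
open scoped RealInnerProductSpace

set_option maxHeartbeats 1000000 in
/-- **Stochastic potential lemma, base case** (`k = 0`, from the proof of
Lemma A.1 of the paper).  With `z₁ = z₀ - α₀(F z₀ + ξ₀)` and
`V₀ = (α₀(L²α₀² - 1)/2)‖F z₀‖²`, `V₁ = a₁‖F z₁‖² - ⟪F z₁, z₀ - z₁⟫`,
one has `E[V₀] - E[V₁] ≥ -(L²α₀³/2 + Lα₀²)σ₀²`. -/
theorem sfeg_potential_base_case
    {d : ℕ} {Ω : Type*} [MeasurableSpace Ω] (μ : Measure Ω) [IsProbabilityMeasure μ]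
    (L : ℝ) (hL : 0 < L)
    (F : EuclideanSpace ℝ (Fin d) → EuclideanSpace ℝ (Fin d))
    (hLip : ∀ z z' : EuclideanSpace ℝ (Fin d), ‖F z - F z'‖ ≤ L * ‖z - z'‖)
    (hMono : ∀ z z' : EuclideanSpace ℝ (Fin d), 0 ≤ ⟪F z - F z', z - z'⟫)
    (z0 : EuclideanSpace ℝ (Fin d))
    (α0 : ℝ) (hα0 : 0 < α0)
    (ξ0 : Ω → EuclideanSpace ℝ (Fin d))
    (hmeas : Measurable ξ0)
    (hmean : ∫ ω, ξ0 ω ∂μ = 0)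
    (σ0sq : ℝ)
    (hint : Integrable (fun ω => ‖ξ0 ω‖ ^ 2) μ)
    (hvar : ∫ ω, ‖ξ0 ω‖ ^ 2 ∂μ = σ0sq)
    (z1 : Ω → EuclideanSpace ℝ (Fin d))
    (hz1 : ∀ ω, z1 ω = z0 - α0 • (F z0 + ξ0 ω))
    (α1 β1 : ℝ) (hα1 : 0 < α1) (hβ1 : β1 ∈ Set.Ioo (0 : ℝ) 1)
    (hcoef : (1 - β1) * α1 / (2 * β1) ≤ α0 / 2) :
    -(L ^ 2 * α0 ^ 3 / 2 + L * α0 ^ 2) * σ0sq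
      ≤ (α0 * (L ^ 2 * α0 ^ 2 - 1) / 2) * ‖F z0‖ ^ 2
        - ∫ ω, (((1 - β1) * α1 / (2 * β1)) * ‖F (z1 ω)‖ ^ 2
            - ⟪F (z1 ω), z0 - z1 ω⟫) ∂μ := by
  obtain ⟨hβ0, hβ1lt⟩ := hβ1
  set g := F z0 with hgdef
  set a1 := (1 - β1) * α1 / (2 * β1) with ha1def
  have ha1le : a1 ≤ α0 / 2 := hcoef
  have hLW : LipschitzWith (Real.toNNReal L) F :=
    LipschitzWith.of_dist_le_mul fun x y => by
      rw [dist_eq_norm, dist_eq_norm, Real.coe_toNNReal _ hL.le]; exact hLip x y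
  have hFc : Continuous F := hLW.continuous
  have hz1m : Measurable z1 := by
    have h : z1 = fun ω => z0 - α0 • (g + ξ0 ω) := funext hz1
    rw [h]
    exact measurable_const.sub ((measurable_const.add hmeas).const_smul α0)
  have hwm : Measurable (fun ω => F (z1 ω)) := hFc.measurable.comp hz1m
  set wbar := F (z0 - α0 • g) with hwbardef
  -- basic norm computations
  have hzz : ∀ ω, z0 - z1 ω = α0 • (g + ξ0 ω) := by
    intro ω; rw [hz1 ω]; abel
  have hnz : ∀ ω, ‖z0 - z1 ω‖ = α0 * ‖g + ξ0 ω‖ := by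
    intro ω
    rw [hzz ω, norm_smul, Real.norm_eq_abs, abs_of_pos hα0]
  -- pointwise key inequality
  have hkey : ∀ ω, a1 * ‖F (z1 ω)‖ ^ 2 - ⟪F (z1 ω), z0 - z1 ω⟫ ≤
      (L ^ 2 * α0 ^ 3 / 2) * ‖g + ξ0 ω‖ ^ 2 - (α0 / 2) * ‖g‖ ^ 2
        - α0 * ⟪wbar, ξ0 ω⟫ + L * α0 ^ 2 * ‖ξ0 ω‖ ^ 2 := by
    intro ω
    set w := F (z1 ω) with hwdef
    set s := ξ0 ω with hsdef
    set u := g + s with hudef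
    have hA : ‖w - g‖ ≤ L * (α0 * ‖u‖) := by
      have h1 := hLip (z1 ω) z0
      have h2 : ‖z1 ω - z0‖ = α0 * ‖u‖ := by
        rw [show z1 ω - z0 = -(z0 - z1 ω) by abel, norm_neg, hnz ω]
      rw [h2] at h1
      exact h1
    have hB : ‖w - wbar‖ ≤ L * (α0 * ‖s‖) := by
      have h1 := hLip (z1 ω) (z0 - α0 • g)
      have h2 : z1 ω - (z0 - α0 • g) = -(α0 • s) := by
        rw [hz1 ω, smul_add]; abel
      rw [h2, norm_neg, norm_smul, Real.norm_eq_abs, abs_of_pos hα0] at h1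
      exact h1
    have hip : ⟪w, z0 - z1 ω⟫ = α0 * ⟪w, u⟫ := by
      rw [hzz ω, real_inner_smul_right]
    rw [hip]
    have i1 : ‖w - g‖ ^ 2 = ‖w‖ ^ 2 - 2 * ⟪w, g⟫ + ‖g‖ ^ 2 := norm_sub_sq_real w g
    have i2 : ⟪w, u⟫ = ⟪w, g⟫ + ⟪w, s⟫ := by rw [hudef, inner_add_right]
    have i3 : ⟪w - wbar, s⟫ = ⟪w, s⟫ - ⟪wbar, s⟫ := by rw [inner_sub_left]
    have i4 : -(L * (α0 * ‖s‖) * ‖s‖) ≤ ⟪w - wbar, s⟫ := by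
      have h1 := abs_real_inner_le_norm (w - wbar) s
      have h2 := neg_abs_le ⟪w - wbar, s⟫
      nlinarith [norm_nonneg s, norm_nonneg (w - wbar)]
    have i5 : ‖w - g‖ ^ 2 ≤ (L * (α0 * ‖u‖)) ^ 2 :=
      pow_le_pow_left₀ (norm_nonneg _) hA 2
    have i7 : a1 * ‖w‖ ^ 2 ≤ (α0 / 2) * ‖w‖ ^ 2 :=
      mul_le_mul_of_nonneg_right ha1le (by positivity)
    have e1 : (α0 / 2) * (‖w‖ ^ 2 - 2 * ⟪w, g⟫ + ‖g‖ ^ 2)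
        ≤ (α0 / 2) * (L * (α0 * ‖u‖)) ^ 2 := by
      apply mul_le_mul_of_nonneg_left _ (by positivity)
      rw [← i1]; exact i5
    have e2 : α0 * (⟪wbar, s⟫ - ⟪w, s⟫) ≤ α0 * (L * (α0 * ‖s‖) * ‖s‖) := by
      apply mul_le_mul_of_nonneg_left _ hα0.le
      have h3 : ⟪wbar, s⟫ - ⟪w, s⟫ = -⟪w - wbar, s⟫ := by rw [i3]; ring
      rw [h3]; linarith [i4]
    rw [i2]
    linarith [e1, e2, i7]
  -- integrability
  have hiξ : Integrable ξ0 μ := by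
    refine Integrable.mono' ((integrable_const (1 : ℝ)).add hint)
      hmeas.aestronglyMeasurable (ae_of_all _ fun ω => ?_)
    have h : ‖ξ0 ω‖ ≤ 1 + ‖ξ0 ω‖ ^ 2 := by nlinarith [sq_nonneg (‖ξ0 ω‖ - 1)]
    simpa using h
  have hi_u2 : Integrable (fun ω => ‖g + ξ0 ω‖ ^ 2) μ := by
    refine Integrable.mono' ((integrable_const (2 * ‖g‖ ^ 2)).add (hint.const_mul 2))
      (((hmeas.const_add g).norm.pow_const 2).aestronglyMeasurable)
      (ae_of_all _ fun ω => ?_)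
    have h1 : ‖g + ξ0 ω‖ ≤ ‖g‖ + ‖ξ0 ω‖ := norm_add_le _ _
    have h2 : ‖(‖g + ξ0 ω‖ ^ 2 : ℝ)‖ = ‖g + ξ0 ω‖ ^ 2 := by
      rw [Real.norm_eq_abs, abs_of_nonneg (by positivity)]
    have h3 : ‖g + ξ0 ω‖ ^ 2 ≤ (‖g‖ + ‖ξ0 ω‖) ^ 2 :=
      pow_le_pow_left₀ (norm_nonneg _) h1 2
    simp only [Pi.add_apply]
    rw [h2]
    nlinarith [h3, sq_nonneg (‖g‖ - ‖ξ0 ω‖)]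
  have hq : ∀ ω, ‖F (z1 ω)‖ ≤ (1 + L * α0) * ‖g‖ + L * α0 * ‖ξ0 ω‖ := by
    intro ω
    have h1 : ‖F (z1 ω) - g‖ ≤ L * ‖z1 ω - z0‖ := hLip (z1 ω) z0
    have h2 : ‖z1 ω - z0‖ = α0 * ‖g + ξ0 ω‖ := by
      rw [show z1 ω - z0 = -(z0 - z1 ω) by abel, norm_neg, hnz ω]
    rw [h2] at h1
    have h3 : ‖g + ξ0 ω‖ ≤ ‖g‖ + ‖ξ0 ω‖ := norm_add_le _ _
    have h4 : ‖F (z1 ω)‖ ≤ ‖g‖ + ‖F (z1 ω) - g‖ := by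
      have := norm_add_le g (F (z1 ω) - g)
      simpa using this
    have h5 : L * (α0 * ‖g + ξ0 ω‖) ≤ L * (α0 * (‖g‖ + ‖ξ0 ω‖)) := by
      apply mul_le_mul_of_nonneg_left _ hL.le
      exact mul_le_mul_of_nonneg_left h3 hα0.le
    linarith [h1, h4, h5]
  have hi_w2 : Integrable (fun ω => ‖F (z1 ω)‖ ^ 2) μ := by
    refine Integrable.mono'
      ((integrable_const (2 * ((1 + L * α0) * ‖g‖) ^ 2)).add
        (hint.const_mul (2 * (L * α0) ^ 2)))
      ((hwm.norm.pow_const 2).aestronglyMeasurable)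
      (ae_of_all _ fun ω => ?_)
    have h2 : ‖(‖F (z1 ω)‖ ^ 2 : ℝ)‖ = ‖F (z1 ω)‖ ^ 2 := by
      rw [Real.norm_eq_abs, abs_of_nonneg (by positivity)]
    have h3 : ‖F (z1 ω)‖ ^ 2 ≤ ((1 + L * α0) * ‖g‖ + L * α0 * ‖ξ0 ω‖) ^ 2 :=
      pow_le_pow_left₀ (norm_nonneg _) (hq ω) 2
    simp only [Pi.add_apply]
    rw [h2]
    nlinarith [h3, sq_nonneg ((1 + L * α0) * ‖g‖ - L * α0 * ‖ξ0 ω‖)]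
  have hi_d2 : Integrable (fun ω => ‖z0 - z1 ω‖ ^ 2) μ := by
    have h : (fun ω => ‖z0 - z1 ω‖ ^ 2) = fun ω => α0 ^ 2 * ‖g + ξ0 ω‖ ^ 2 := by
      funext ω; rw [hnz ω]; ring
    rw [h]; exact hi_u2.const_mul _
  have hi_inw : Integrable (fun ω => ⟪F (z1 ω), z0 - z1 ω⟫) μ := by
    refine Integrable.mono' ((hi_w2.add hi_d2).const_mul (1 / 2))
      (hwm.inner (measurable_const.sub hz1m)).aestronglyMeasurable
      (ae_of_all _ fun ω => ?_)
    have h1 := abs_real_inner_le_norm (F (z1 ω)) (z0 - z1 ω)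
    have h2 : ‖⟪F (z1 ω), z0 - z1 ω⟫‖ = |⟪F (z1 ω), z0 - z1 ω⟫| := rfl
    simp only [Pi.add_apply]
    rw [h2]
    nlinarith [h1, sq_nonneg (‖F (z1 ω)‖ - ‖z0 - z1 ω‖), abs_nonneg ⟪F (z1 ω), z0 - z1 ω⟫]
  have hi_inwbar : Integrable (fun ω => ⟪wbar, ξ0 ω⟫) μ := hiξ.const_inner wbar
  have hi_ing : Integrable (fun ω => ⟪g, ξ0 ω⟫) μ := hiξ.const_inner g
  have hiV1 : Integrable
      (fun ω => a1 * ‖F (z1 ω)‖ ^ 2 - ⟪F (z1 ω), z0 - z1 ω⟫) μ :=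
    (hi_w2.const_mul a1).sub hi_inw
  have hiB : Integrable (fun ω =>
      (L ^ 2 * α0 ^ 3 / 2) * ‖g + ξ0 ω‖ ^ 2 - (α0 / 2) * ‖g‖ ^ 2
        - α0 * ⟪wbar, ξ0 ω⟫ + L * α0 ^ 2 * ‖ξ0 ω‖ ^ 2) μ :=
    (((hi_u2.const_mul _).sub (integrable_const _)).sub
      (hi_inwbar.const_mul α0)).add (hint.const_mul _)
  have hle : (∫ ω, (a1 * ‖F (z1 ω)‖ ^ 2 - ⟪F (z1 ω), z0 - z1 ω⟫) ∂μ)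
      ≤ ∫ ω, ((L ^ 2 * α0 ^ 3 / 2) * ‖g + ξ0 ω‖ ^ 2 - (α0 / 2) * ‖g‖ ^ 2
        - α0 * ⟪wbar, ξ0 ω⟫ + L * α0 ^ 2 * ‖ξ0 ω‖ ^ 2) ∂μ :=
    integral_mono hiV1 hiB hkey
  -- compute the integral of the bound
  have hI2 : ∫ ω, ⟪wbar, ξ0 ω⟫ ∂μ = 0 := by
    rw [integral_inner hiξ, hmean, inner_zero_right]
  have hI1 : ∫ ω, ‖g + ξ0 ω‖ ^ 2 ∂μ = ‖g‖ ^ 2 + σ0sq := by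
    have h : (fun ω => ‖g + ξ0 ω‖ ^ 2)
        = fun ω => (‖g‖ ^ 2 + 2 * ⟪g, ξ0 ω⟫) + ‖ξ0 ω‖ ^ 2 := by
      funext ω
      rw [norm_add_sq_real]
    have hadd0 : Integrable (fun ω => 2 * ⟪g, ξ0 ω⟫) μ := hi_ing.const_mul 2
    have hadd1 : Integrable (fun ω => ‖g‖ ^ 2 + 2 * ⟪g, ξ0 ω⟫) μ :=
      (integrable_const _).add hadd0
    rw [h, integral_add hadd1 hint, integral_add (integrable_const _) hadd0,
      integral_const, integral_const_mul, integral_inner hiξ, hmean,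
      inner_zero_right, hvar]
    simp
  have hIB : ∫ ω, ((L ^ 2 * α0 ^ 3 / 2) * ‖g + ξ0 ω‖ ^ 2 - (α0 / 2) * ‖g‖ ^ 2
        - α0 * ⟪wbar, ξ0 ω⟫ + L * α0 ^ 2 * ‖ξ0 ω‖ ^ 2) ∂μ
      = (L ^ 2 * α0 ^ 3 / 2) * (‖g‖ ^ 2 + σ0sq) - (α0 / 2) * ‖g‖ ^ 2
        + L * α0 ^ 2 * σ0sq := by
    have hb1 : Integrable (fun ω => L ^ 2 * α0 ^ 3 / 2 * ‖g + ξ0 ω‖ ^ 2) μ :=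
      hi_u2.const_mul _
    have hb2 : Integrable
        (fun ω => L ^ 2 * α0 ^ 3 / 2 * ‖g + ξ0 ω‖ ^ 2 - α0 / 2 * ‖g‖ ^ 2) μ :=
      hb1.sub (integrable_const _)
    have hb4 : Integrable (fun ω => α0 * ⟪wbar, ξ0 ω⟫) μ := hi_inwbar.const_mul α0
    have hb3 : Integrable
        (fun ω => L ^ 2 * α0 ^ 3 / 2 * ‖g + ξ0 ω‖ ^ 2 - α0 / 2 * ‖g‖ ^ 2
          - α0 * ⟪wbar, ξ0 ω⟫) μ := hb2.sub hb4
    have hb5 : Integrable (fun ω => L * α0 ^ 2 * ‖ξ0 ω‖ ^ 2) μ := hint.const_mul _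
    rw [integral_add hb3 hb5, integral_sub hb2 hb4, integral_sub hb1 (integrable_const _),
      integral_const_mul, integral_const_mul, integral_const_mul,
      hI1, hI2, integral_const_mul, hvar, integral_const]
    simp
  linarith [hle, hIB.symm.le, hIB.le]
end
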